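/- arXiv:1203.2871 — 9 statements merged into one kernel-verified Lean document; each statement's English description precedes it below -/
import Mathlib

section
/- Let n ∈ ℕ, E a complex Hilbert space, F a complex Banach space, and g : E^n → F an n-linear (linear in each component), continuous map that is symmetric in its arguments. Define ĝ(x) = g(x,…,x) for x ∈ E, ‖g‖ = sup{‖g(x_1,…,x_n)‖ : x_i ∈ E, ‖x_i‖ ≤ 1 for each i}, and ‖ĝ‖ = sup{‖ĝ(x)‖ : x ∈ E, ‖x‖ ≤ 1}. Then ‖g‖ = ‖ĝ‖. -/
/-!
It suffices to treat tuples spanning a finite-dimensional subspace. There the tuples in the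
closed unit ball at which `g` attains its norm form a nonempty compact set; pick one, `p`,
maximizing `‖∑ k, p k‖`. If two entries `x ≠ y` of `p` differed, the polarization identity
`4 g(…x…y…) = g(…x+y…x+y…) - g(…x-y…x-y…)` and the parallelogram law show that `g` still
attains its norm after replacing both entries by `u = (x + y) / ‖x + y‖`, or by `-u`. As
`‖x + y‖ < 2`, one of these two replacements strictly increases `‖∑ k, p k‖`. Hence `p` is
constant, and the norm of `g` is attained on the diagonal.
-/

open Function Finset RCLike

theorem Fintype.sum_update {ι M : Type*} [Fintype ι] [DecidableEq ι] [AddCommGroup M]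
    (f : ι → M) (i : ι) (b : M) : ∑ k, update f i b k = ∑ k, f k - f i + b := by
  rw [sum_update_of_mem (mem_univ i), sum_eq_add_sum_sdiff_singleton_of_mem (mem_univ i)]
  abel

section Bilinear

variable {R ι M N : Type*} [CommSemiring R] [DecidableEq ι] [AddCommMonoid M] [Module R M]
  [AddCommMonoid N] [Module R N]

def MultilinearMap.toLinearMap₂ (f : MultilinearMap R (fun _ : ι => M) N) (m : ι → M) {i j : ι}
    (hij : i ≠ j) : M →ₗ[R] M →ₗ[R] N :=
  LinearMap.mk₂ R (fun s t => f (update (update m i s) j t))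
    (fun s s' t => by simp only [update_comm hij]; exact f.map_update_add _ i s s')
    (fun c s t => by simp only [update_comm hij]; exact f.map_update_smul _ i c s)
    (fun s t t' => f.map_update_add _ j t t')
    (fun c s t => f.map_update_smul _ j c t)

@[simp]
theorem MultilinearMap.toLinearMap₂_apply (f : MultilinearMap R (fun _ : ι => M) N) (m : ι → M)
    {i j : ι} (hij : i ≠ j) (s t : M) :
    f.toLinearMap₂ m hij s t = f (update (update m i s) j t) := rfl

theorem MultilinearMap.toLinearMap₂_comm (f : MultilinearMap R (fun _ : ι => M) N)
    (hf : ∀ (σ : Equiv.Perm ι) (v : ι → M), f (v ∘ σ) = f v) (m : ι → M) {i j : ι}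
    (hij : i ≠ j) (s t : M) : f.toLinearMap₂ m hij s t = f.toLinearMap₂ m hij t s := by
  rw [toLinearMap₂_apply, toLinearMap₂_apply, ← hf (Equiv.swap i j)]
  congr 1
  ext k
  rcases eq_or_ne k i with rfl | hki
  · simp [hij]
  rcases eq_or_ne k j with rfl | hkj
  · simp [hij]
  · simp [Equiv.swap_apply_of_ne_of_ne hki hkj, hki, hkj]

end Bilinear

namespace ContinuousMultilinearMap

theorem norm_apply_update_update_le {𝕜 ι E F : Type*} [NontriviallyNormedField 𝕜] [Fintype ι]
    [DecidableEq ι] [NormedAddCommGroup E] [NormedSpace 𝕜 E] [NormedAddCommGroup F]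
    [NormedSpace 𝕜 F] (g : ContinuousMultilinearMap 𝕜 (fun _ : ι => E) F) {m : ι → E}
    (hm : ∀ k, ‖m k‖ ≤ 1) {i j : ι} (hij : i ≠ j) (s t : E) :
    ‖g (update (update m i s) j t)‖ ≤ ‖g‖ * (‖s‖ * ‖t‖) := by
  have hb : ∀ k, ‖update (update m i s) j t k‖ ≤
      update (update (fun _ => (1 : ℝ)) i ‖s‖) j ‖t‖ k := by
    intro k
    rcases eq_or_ne k j with rfl | hkj
    · simp
    rcases eq_or_ne k i with rfl | hki
    · simp [hkj]
    · simp [hkj, hki, hm k]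
  refine (g.le_opNorm_mul_prod_of_le hb).trans_eq ?_
  rw [prod_update_of_mem (mem_univ j), prod_update_of_mem (by simpa using hij)]
  simp [mul_comm]

theorem exists_norm_apply_eq_opNorm {𝕜 ι F : Type*} {E : ι → Type*} [RCLike 𝕜] [Fintype ι]
    [∀ i, NormedAddCommGroup (E i)] [∀ i, NormedSpace 𝕜 (E i)] [∀ i, ProperSpace (E i)]
    [NormedAddCommGroup F] [NormedSpace 𝕜 F] (g : ContinuousMultilinearMap 𝕜 E F) :
    ∃ m : ∀ i, E i, ‖m‖ ≤ 1 ∧ ‖g m‖ = ‖g‖ := by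
  obtain ⟨m, hm, hmax⟩ := (isCompact_closedBall (0 : ∀ i, E i) 1).exists_isMaxOn
    ⟨0, by simp⟩ g.coe_continuous.norm.continuousOn
  rw [mem_closedBall_zero_iff] at hm
  refine ⟨m, hm, le_antisymm (g.unit_le_opNorm hm) ?_⟩
  refine g.opNorm_le_bound (norm_nonneg _) fun w => ?_
  by_cases hw : ∃ k, w k = 0
  · obtain ⟨k, hk⟩ := hw
    simp only [g.map_coord_zero k hk, norm_zero]
    positivity
  push Not at hw
  have hunit : ‖g (fun k => (‖w k‖⁻¹ : 𝕜) • w k)‖ ≤ ‖g m‖ := hmax <| mem_closedBall_zero_iff.2 <|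
    (pi_norm_le_iff_of_nonneg zero_le_one).2 fun k => (norm_smul_inv_norm (hw k)).le
  have hpos : 0 < ∏ k, ‖w k‖ := prod_pos fun k _ => norm_pos_iff.2 (hw k)
  rw [g.map_smul_univ, norm_smul, norm_prod] at hunit
  simp only [norm_inv, norm_ofReal, abs_norm, prod_inv_distrib] at hunit
  rwa [inv_mul_le_iff₀ hpos, mul_comm] at hunit

end ContinuousMultilinearMap

section InnerProduct

variable {𝕜 E F : Type*} [RCLike 𝕜] [NormedAddCommGroup E] [InnerProductSpace 𝕜 E]
  [NormedAddCommGroup F] [NormedSpace 𝕜 F]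

theorem norm_add_smul_lt_max {s u : E} (hu : u ≠ 0) {t r : ℝ} (ht : |t| < r) :
    ‖s + (t : 𝕜) • u‖ < max ‖s + (r : 𝕜) • u‖ ‖s - (r : 𝕜) • u‖ := by
  have hsq : ∀ c : ℝ,
      ‖s + (c : 𝕜) • u‖ ^ 2 = ‖s‖ ^ 2 + 2 * c * re (inner 𝕜 s u) + c ^ 2 * ‖u‖ ^ 2 := by
    intro c
    rw [norm_add_sq (𝕜 := 𝕜), inner_smul_right, re_ofReal_mul, norm_smul, norm_ofReal, mul_pow,
      sq_abs]
    ring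
  have hu2 : 0 < ‖u‖ ^ 2 := by positivity
  obtain ⟨htr, htr'⟩ := abs_lt.1 ht
  by_contra! hle
  have h₁ := pow_le_pow_left₀ (norm_nonneg _) (le_max_left _ _ |>.trans hle) 2
  have h₂ := pow_le_pow_left₀ (norm_nonneg _) (le_max_right _ _ |>.trans hle) 2
  rw [sub_eq_add_neg, ← neg_smul, ← ofReal_neg] at h₂
  rw [hsq, hsq] at h₁ h₂
  nlinarith [mul_pos (mul_pos (by linarith : 0 < r + t) (by linarith : 0 < r - t)) hu2]

theorem LinearMap.exists_le_norm_apply_self_of_comm {B : E →ₗ[𝕜] E →ₗ[𝕜] F}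
    (hB : ∀ s t, B s t = B t s)
    {M : ℝ} (hM : ∀ s t, ‖B s t‖ ≤ M * (‖s‖ * ‖t‖)) {x y : E} (hx : ‖x‖ ≤ 1) (hy : ‖y‖ ≤ 1)
    (hxy : x ≠ y) (hBxy : M ≤ ‖B x y‖) :
    ∃ u : E, u ≠ 0 ∧ ‖u‖ ≤ 1 ∧ M ≤ ‖B u u‖ ∧ ∃ t : ℝ, |t| < 2 ∧ x + y = (t : 𝕜) • u := by
  by_cases h0 : x + y = 0
  · have hyx : y = -x := eq_neg_of_add_eq_zero_right h0
    exact ⟨x, fun hx0 => hxy (by simp [hyx, hx0]), hx, by simpa [hyx] using hBxy, 0, by simp,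
      by simpa using h0⟩
  set N := ‖x + y‖
  have hN : 0 < N := norm_pos_iff.2 h0
  set u : E := ((N⁻¹ : ℝ) : 𝕜) • (x + y)
  have hu : ‖u‖ = 1 := by simpa [u] using norm_smul_inv_norm (𝕜 := 𝕜) h0
  have hxyu : x + y = (N : 𝕜) • u := by
    rw [smul_smul, ← ofReal_mul, mul_inv_cancel₀ hN.ne', ofReal_one, one_smul]
  have hpar : N ^ 2 + ‖x - y‖ ^ 2 = 2 * (‖x‖ ^ 2 + ‖y‖ ^ 2) :=
    parallelogram_law_with_norm 𝕜 x y
  have hxy4 : N ^ 2 + ‖x - y‖ ^ 2 ≤ 4 := by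
    nlinarith [pow_le_one₀ (n := 2) (norm_nonneg x) hx, pow_le_one₀ (n := 2) (norm_nonneg y) hy]
  have hNlt : N < 2 := by
    have : 0 < ‖x - y‖ := norm_pos_iff.2 (sub_ne_zero.2 hxy)
    nlinarith
  refine ⟨u, norm_ne_zero_iff.1 (by simp [hu]), hu.le, ?_, N, by rwa [abs_of_pos hN], hxyu⟩
  have hpol : (4 : 𝕜) • B x y = B (x + y) (x + y) - B (x - y) (x - y) := by
    simp only [map_add, map_sub, LinearMap.add_apply, LinearMap.sub_apply, hB y x]
    module
  have hdiag : ‖B (x + y) (x + y)‖ = N ^ 2 * ‖B u u‖ := by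
    simp only [hxyu, map_smul, LinearMap.smul_apply, norm_smul, norm_ofReal, abs_of_pos hN]
    ring
  have h4 : 4 * ‖B x y‖ ≤ N ^ 2 * ‖B u u‖ + M * ‖x - y‖ ^ 2 := by
    calc 4 * ‖B x y‖ = ‖(4 : 𝕜) • B x y‖ := by rw [norm_smul, RCLike.norm_ofNat]
      _ ≤ ‖B (x + y) (x + y)‖ + ‖B (x - y) (x - y)‖ := hpol ▸ norm_sub_le _ _
      _ ≤ N ^ 2 * ‖B u u‖ + M * ‖x - y‖ ^ 2 := by
        rw [hdiag]
        gcongr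
        exact (hM _ _).trans_eq (by ring)
  have hM0 : 0 ≤ M :=
    nonneg_of_mul_nonneg_left ((norm_nonneg _).trans (hM (x + y) (x + y))) (by positivity)
  have : N ^ 2 * M ≤ N ^ 2 * ‖B u u‖ := by
    nlinarith [mul_nonneg hM0 (show 0 ≤ 4 - N ^ 2 - ‖x - y‖ ^ 2 by linarith)]
  exact le_of_mul_le_mul_left this (by positivity)

end InnerProduct

namespace ContinuousMultilinearMap

variable {𝕜 ι E F : Type*} [RCLike 𝕜] [Fintype ι] [NormedAddCommGroup E] [InnerProductSpace 𝕜 E]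
  [NormedAddCommGroup F] [NormedSpace 𝕜 F]

def normingTuples (g : ContinuousMultilinearMap 𝕜 (fun _ : ι => E) F) : Set (ι → E) :=
  Metric.closedBall 0 1 ∩ {m | ‖g m‖ = ‖g‖}

theorem apply_eq_of_isMaxOn_norm_sum [DecidableEq ι]
    {g : ContinuousMultilinearMap 𝕜 (fun _ : ι => E) F}
    (hg : ∀ (σ : Equiv.Perm ι) (v : ι → E), g (v ∘ σ) = g v) {p : ι → E}
    (hp : p ∈ g.normingTuples) (hmax : IsMaxOn (fun w : ι → E => ‖∑ k, w k‖) g.normingTuples p)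
    (i j : ι) : p i = p j := by
  by_contra hne
  have hij : i ≠ j := fun h => hne (h ▸ rfl)
  have hp1 : ∀ k, ‖p k‖ ≤ 1 :=
    fun k => (norm_le_pi_norm p k).trans (mem_closedBall_zero_iff.1 hp.1)
  set B := g.toMultilinearMap.toLinearMap₂ p hij
  obtain ⟨u, hu0, hu1, hBu, t, ht, hpij⟩ :=
    LinearMap.exists_le_norm_apply_self_of_comm (B := B)
      (g.toMultilinearMap.toLinearMap₂_comm hg p hij) (g.norm_apply_update_update_le hp1 hij)
      (hp1 i) (hp1 j) hne (by simp [B, hp.2.symm.le])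
  have hmem : ∀ v : E, ‖v‖ ≤ 1 → ‖g‖ ≤ ‖B v v‖ →
      update (update p i v) j v ∈ g.normingTuples := by
    intro v hv hBv
    have hball : ‖update (update p i v) j v‖ ≤ 1 := by
      refine (pi_norm_le_iff_of_nonneg zero_le_one).2 fun k => ?_
      simp only [update_apply]
      split_ifs
      exacts [hv, hv, hp1 k]
    exact ⟨mem_closedBall_zero_iff.2 hball, le_antisymm (g.unit_le_opNorm hball) hBv⟩
  have hsum : ∀ v : E,
      ∑ k, update (update p i v) j v k = (∑ k, p k - p i - p j) + (2 : 𝕜) • v := by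
    intro v
    rw [Fintype.sum_update, Fintype.sum_update, update_of_ne hij.symm, two_smul]
    abel
  have h₁ : ‖∑ k, update (update p i u) j u k‖ ≤ ‖∑ k, p k‖ := hmax (hmem u hu1 hBu)
  have h₂ : ‖∑ k, update (update p i (-u)) j (-u) k‖ ≤ ‖∑ k, p k‖ :=
    hmax (hmem (-u) (by rwa [norm_neg]) (by simpa using hBu))
  have hlt := norm_add_smul_lt_max (𝕜 := 𝕜) (s := ∑ k, p k - p i - p j) hu0 ht
  have hp_sum : ∑ k, p k = (∑ k, p k - p i - p j) + (t : 𝕜) • u := by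
    rw [← hpij]
    abel
  rw [hsum, smul_neg, ← sub_eq_add_neg] at h₂
  rw [hsum] at h₁
  rw [ofReal_ofNat, ← hp_sum] at hlt
  exact hlt.not_ge (max_le h₁ h₂)

theorem exists_norm_apply_diag_eq_opNorm [FiniteDimensional 𝕜 E]
    (g : ContinuousMultilinearMap 𝕜 (fun _ : ι => E) F)
    (hg : ∀ (σ : Equiv.Perm ι) (v : ι → E), g (v ∘ σ) = g v) :
    ∃ x : E, ‖x‖ ≤ 1 ∧ ‖g (fun _ => x)‖ = ‖g‖ := by
  classical
  have := FiniteDimensional.proper_rclike 𝕜 E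
  have hK : IsCompact g.normingTuples :=
    (isCompact_closedBall 0 1).inter_right (isClosed_eq g.coe_continuous.norm continuous_const)
  obtain ⟨m, hm, hgm⟩ := g.exists_norm_apply_eq_opNorm
  obtain ⟨p, hp, hmax⟩ := hK.exists_isMaxOn ⟨m, mem_closedBall_zero_iff.2 hm, hgm⟩
    (continuous_finsetSum _ fun k _ => continuous_apply k).norm.continuousOn
  rcases isEmpty_or_nonempty ι with hι | ⟨⟨i₀⟩⟩
  · exact ⟨0, by simp, by rw [← hp.2, Subsingleton.elim p]⟩
  · refine ⟨p i₀, (norm_le_pi_norm p i₀).trans (mem_closedBall_zero_iff.1 hp.1), ?_⟩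
    rw [← hp.2]
    congr
    funext k
    exact apply_eq_of_isMaxOn_norm_sum hg hp hmax i₀ k

theorem exists_norm_apply_le_norm_apply_diag
    (g : ContinuousMultilinearMap 𝕜 (fun _ : ι => E) F)
    (hg : ∀ (σ : Equiv.Perm ι) (v : ι → E), g (v ∘ σ) = g v) {v : ι → E} (hv : ∀ k, ‖v k‖ ≤ 1) :
    ∃ x : E, ‖x‖ ≤ 1 ∧ ‖g v‖ ≤ ‖g (fun _ => x)‖ := by
  let V := Submodule.span 𝕜 (Set.range v)
  have : FiniteDimensional 𝕜 V := FiniteDimensional.span_of_finite 𝕜 (Set.finite_range v)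
  let gV := g.compContinuousLinearMap fun _ => V.subtypeL
  obtain ⟨x, hx, hgx⟩ := gV.exists_norm_apply_diag_eq_opNorm fun σ w => hg σ (fun k => w k)
  let w : ι → V := fun k => ⟨v k, Submodule.subset_span (Set.mem_range_self k)⟩
  refine ⟨x, hx, ?_⟩
  calc ‖g v‖ = ‖gV w‖ := rfl
    _ ≤ ‖gV‖ := gV.unit_le_opNorm ((pi_norm_le_iff_of_nonneg zero_le_one).2 hv)
    _ = ‖g (fun _ => x)‖ := hgx.symm

end ContinuousMultilinearMap

theorem stmt3_general (n : ℕ) {E F : Type*}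
    [NormedAddCommGroup E] [InnerProductSpace ℂ E]
    [NormedAddCommGroup F] [NormedSpace ℂ F]
    (g : ContinuousMultilinearMap ℂ (fun _ : Fin n => E) F)
    (hsymm : ∀ (σ : Equiv.Perm (Fin n)) (v : Fin n → E), g (v ∘ σ) = g v) :
    sSup {r : ℝ | ∃ v : Fin n → E, (∀ i, ‖v i‖ ≤ 1) ∧ r = ‖g v‖} =
      sSup {r : ℝ | ∃ x : E, ‖x‖ ≤ 1 ∧ r = ‖g (fun _ => x)‖} := by
  set A := {r : ℝ | ∃ v : Fin n → E, (∀ i, ‖v i‖ ≤ 1) ∧ r = ‖g v‖}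
  set D := {r : ℝ | ∃ x : E, ‖x‖ ≤ 1 ∧ r = ‖g (fun _ => x)‖}
  have hDA : D ⊆ A := by
    rintro r ⟨x, hx, rfl⟩
    exact ⟨fun _ => x, fun _ => hx, rfl⟩
  have hA : BddAbove A := ⟨‖g‖, by
    rintro r ⟨v, hv, rfl⟩
    exact g.unit_le_opNorm ((pi_norm_le_iff_of_nonneg zero_le_one).2 hv)⟩
  have hD : D.Nonempty := ⟨_, 0, by simp, rfl⟩
  refine le_antisymm (csSup_le (hD.mono hDA) ?_) (csSup_le_csSup hA hD hDA)
  rintro r ⟨v, hv, rfl⟩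
  obtain ⟨x, hx, hle⟩ := g.exists_norm_apply_le_norm_apply_diag hsymm hv
  exact hle.trans (le_csSup (hA.mono hDA) ⟨x, hx, rfl⟩)

/-- (Hörmander) Let `n ∈ ℕ`, `E` a complex Hilbert space, `F` a complex Banach space, and
`g : E^n → F` an `n`-linear continuous map which is symmetric in its arguments. With
`ĝ(x) = g(x,…,x)`, `‖g‖ = sup{‖g(x_1,…,x_n)‖ : ‖x_i‖ ≤ 1}` and
`‖ĝ‖ = sup{‖ĝ(x)‖ : ‖x‖ ≤ 1}`, one has `‖g‖ = ‖ĝ‖`. -/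
theorem stmt3 (n : ℕ) {E F : Type*}
    [NormedAddCommGroup E] [InnerProductSpace ℂ E] [CompleteSpace E]
    [NormedAddCommGroup F] [NormedSpace ℂ F] [CompleteSpace F]
    (g : ContinuousMultilinearMap ℂ (fun _ : Fin n => E) F)
    (hsymm : ∀ (σ : Equiv.Perm (Fin n)) (v : Fin n → E), g (v ∘ σ) = g v) :
    sSup {r : ℝ | ∃ v : Fin n → E, (∀ i, ‖v i‖ ≤ 1) ∧ r = ‖g v‖} =
      sSup {r : ℝ | ∃ x : E, ‖x‖ ≤ 1 ∧ r = ‖g (fun _ => x)‖} :=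
  stmt3_general n g hsymm
end

section
/- Let N ∈ ℕ and Z = (z_{j,k}) ∈ ℂ^{N×N} be a square complex matrix. Then |per(Z)| ≤ N! · ∏_{k=1}^N ((1/N) ∑_{j=1}^N |z_{j,k}|²)^{1/2}. -/
/-!
Reduce to entrywise nonnegative real matrices (triangle inequality), take rows instead of
columns (`per Zᵀ = per Z`), and scale each row to a unit vector. On the compact set of such
matrices the permanent attains its maximum `M`, and at a maximizer `x` every row is a Lagrange
point: the cofactor vector of row `i` equals `M • x i`. Then replacing two different rows `a`, `b`
by `(a + b) / ‖a + b‖` yields another maximizer whose entry sum is strictly larger, because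
`‖a + b‖ < 2`. So a maximizer with the largest entry sum has all rows equal to one unit vector
`v`, and there `per x = N! ∏ v ≤ N! N^(-N/2)` by AM-GM.
-/

open Finset Matrix

section DotProduct

variable {n : Type*} [Fintype n]

theorem eq_dotProduct_smul_of_forall_dotProduct_le {v w : n → ℝ} (hv0 : 0 ≤ v)
    (hv : v ⬝ᵥ v = 1) (hw0 : 0 ≤ w)
    (hmax : ∀ u : n → ℝ, 0 ≤ u → u ⬝ᵥ u = 1 → u ⬝ᵥ w ≤ v ⬝ᵥ w) : w = (v ⬝ᵥ w) • v := by
  set c := v ⬝ᵥ w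
  obtain ⟨r, hr0, hr2⟩ : ∃ r : ℝ, 0 ≤ r ∧ r ^ 2 = w ⬝ᵥ w :=
    ⟨_, Real.sqrt_nonneg _, Real.sq_sqrt (dotProduct_nonneg_of_nonneg hw0 hw0)⟩
  have hrc : r ≤ c := by
    rcases hr0.eq_or_lt with rfl | hr
    · exact dotProduct_nonneg_of_nonneg hv0 hw0
    · have hunit : r⁻¹ • w ⬝ᵥ r⁻¹ • w = 1 := by
        rw [smul_dotProduct, dotProduct_smul, smul_smul, smul_eq_mul, ← hr2]
        field_simp
      calc r = r⁻¹ * r ^ 2 := by field_simp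
        _ ≤ c := by
          rw [hr2, ← smul_eq_mul, ← smul_dotProduct]
          exact hmax _ (smul_nonneg (inv_nonneg.2 hr.le) hw0) hunit
  have hdist : (w - c • v) ⬝ᵥ (w - c • v) = w ⬝ᵥ w - c ^ 2 := by
    simp only [sub_dotProduct, dotProduct_sub, smul_dotProduct, dotProduct_smul, hv,
      dotProduct_comm w v, smul_eq_mul]
    ring
  have hzero : (w - c • v) ⬝ᵥ (w - c • v) = 0 := by
    refine le_antisymm ?_ (Fintype.sum_nonneg fun _ => mul_self_nonneg _)
    rw [hdist, ← hr2]
    nlinarith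
  exact sub_eq_zero.1 (dotProduct_self_eq_zero.1 hzero)

theorem dotProduct_add_self_lt_four {a b : n → ℝ} (ha : a ⬝ᵥ a = 1) (hb : b ⬝ᵥ b = 1)
    (hab : a ≠ b) : (a + b) ⬝ᵥ (a + b) < 4 := by
  have hpos : 0 < (a - b) ⬝ᵥ (a - b) :=
    lt_of_le_of_ne (Fintype.sum_nonneg fun _ => mul_self_nonneg _)
      (Ne.symm (dotProduct_self_eq_zero.not.2 (sub_ne_zero.2 hab)))
  have hpar : (a + b) ⬝ᵥ (a + b) + (a - b) ⬝ᵥ (a - b) = 4 := by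
    simp only [add_dotProduct, dotProduct_add, sub_dotProduct, dotProduct_sub, ha, hb,
      dotProduct_comm b a]
    ring
  linarith

theorem prod_le_sqrt_inv_card_pow {v : n → ℝ} (hv0 : 0 ≤ v) (hv : v ⬝ᵥ v = 1) :
    ∏ i, v i ≤ √((Fintype.card n : ℝ)⁻¹) ^ Fintype.card n := by
  rcases isEmpty_or_nonempty n with hn | hn
  · simp [dotProduct] at hv
  set N := Fintype.card n
  have hN : 0 < N := Fintype.card_pos
  have hsq : ∑ i, v i ^ 2 = 1 := by simpa [dotProduct, sq] using hv
  have hamgm := Real.geom_mean_le_arith_mean_weighted univ (fun _ => (N : ℝ)⁻¹)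
    (fun i => v i ^ 2) (fun _ _ => by positivity) (by simp [N]) (fun i _ => sq_nonneg _)
  rw [Real.finsetProd_rpow _ _ (fun i _ => sq_nonneg _), ← mul_sum, hsq, mul_one,
    Real.rpow_inv_le_iff_of_pos (prod_nonneg fun i _ => sq_nonneg _) (by positivity)
      (by positivity), Real.rpow_natCast, prod_pow] at hamgm
  refine (pow_le_pow_iff_left₀ (prod_nonneg fun i _ => hv0 i) (by positivity) two_ne_zero).1 ?_
  rwa [← pow_mul, mul_comm, pow_mul, Real.sq_sqrt (by positivity)]

end DotProduct

namespace Matrix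

variable {n R : Type*} [Fintype n]

section Permanent

variable [DecidableEq n]

section CommSemiring

variable [CommSemiring R]

theorem permanent_eq_sum_prod_row (M : Matrix n n R) :
    M.permanent = ∑ σ : Equiv.Perm n, ∏ i, M i (σ i) := by
  rw [← permanent_transpose]
  rfl

theorem permanent_updateRow (M : Matrix n n R) (i : n) (u : n → R) :
    (M.updateRow i u).permanent =
      ∑ σ : Equiv.Perm n, u (σ i) * ∏ k ∈ univ.erase i, M k (σ k) := by
  rw [permanent_eq_sum_prod_row]
  refine sum_congr rfl fun σ _ => ?_
  rw [← mul_prod_erase _ _ (mem_univ i), updateRow_self]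
  congr 1
  exact prod_congr rfl fun k hk => by rw [updateRow_ne (ne_of_mem_erase hk)]

def permanentCofactor (M : Matrix n n R) (i : n) : n → R :=
  fun j => (M.updateRow i (Pi.single j 1)).permanent

theorem permanent_updateRow_eq_dotProduct (M : Matrix n n R) (i : n) (u : n → R) :
    (M.updateRow i u).permanent = u ⬝ᵥ M.permanentCofactor i := by
  simp only [permanentCofactor, permanent_updateRow, dotProduct, mul_sum]
  rw [sum_comm]
  refine sum_congr rfl fun σ _ => ?_
  simp [Pi.single_apply]

theorem permanent_updateRow_add (M : Matrix n n R) (i : n) (u v : n → R) :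
    (M.updateRow i (u + v)).permanent =
      (M.updateRow i u).permanent + (M.updateRow i v).permanent := by
  simp only [permanent_updateRow_eq_dotProduct, add_dotProduct]

theorem permanent_eq_zero_of_row_eq_zero (M : Matrix n n R) {i : n} (h : M i = 0) :
    M.permanent = 0 := by
  rw [permanent_eq_sum_prod_row]
  exact sum_eq_zero fun σ _ => prod_eq_zero (mem_univ i) (by simp [h])

theorem permanent_diagonal_mul (d : n → R) (M : Matrix n n R) :
    (diagonal d * M).permanent = (∏ i, d i) * M.permanent := by
  simp only [permanent_eq_sum_prod_row, diagonal_mul, mul_sum, prod_mul_distrib]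

theorem permanent_of_rows_eq (M : Matrix n n R) {v : n → R} (h : ∀ i, M i = v) :
    M.permanent = (Fintype.card n).factorial * ∏ j, v j := by
  have hσ (σ : Equiv.Perm n) : ∏ i, M i (σ i) = ∏ j, v j := by
    simp only [h, Equiv.prod_comp σ v]
  simp only [permanent_eq_sum_prod_row, hσ, sum_const, card_univ, Fintype.card_perm, nsmul_eq_mul]

theorem permanent_updateRow_updateRow_smul_add {x : Matrix n n R} {i j : n} (hij : i ≠ j)
    (hcof : ∀ l, x.permanentCofactor l = x.permanent • x l) (t : R) :
    ((x.updateRow j (t • (x i + x j))).updateRow i (t • (x i + x j))).permanent =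
      t ^ 2 * (2 + 2 * (x i ⬝ᵥ x j)) * x.permanent := by
  have h_ii : (x.updateRow j (x i)).updateRow i (x i) = x.updateRow j (x i) := by
    ext k l; by_cases hk : k = i <;> by_cases hk' : k = j <;> simp_all [updateRow_apply]
  have h_ji : (x.updateRow j (x i)).updateRow i (x j) = x.submatrix (Equiv.swap i j) id := by
    ext k l; by_cases hk : k = i <;> by_cases hk' : k = j <;>
      simp_all [updateRow_apply, Equiv.swap_apply_of_ne_of_ne]
  have h_jj : (x.updateRow j (x j)).updateRow i (x j) = x.updateRow i (x j) := by simp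
  have h_ij : (x.updateRow j (x j)).updateRow i (x i) = x := by simp
  -- Expanding both rows gives four permanents: two equal `per x` (one up to the swap of rows
  -- `i` and `j`), and by `hcof` the other two equal `per x * (x i ⬝ᵥ x j)`.
  simp only [permanent_updateRow_smul, permanent_updateRow_add]
  rw [updateRow_comm _ hij.symm, updateRow_comm _ hij.symm]
  simp only [permanent_updateRow_smul, permanent_updateRow_add]
  rw [updateRow_comm _ hij, updateRow_comm _ hij, updateRow_comm _ hij, updateRow_comm _ hij,
    h_ii, h_ji, h_jj, h_ij, permanent_permute_cols, permanent_updateRow_eq_dotProduct,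
    permanent_updateRow_eq_dotProduct, hcof, hcof, dotProduct_smul, dotProduct_smul,
    dotProduct_comm (x j)]
  simp only [smul_eq_mul]
  ring

end CommSemiring

section OrderedSemiring

variable [CommSemiring R] [PartialOrder R] [IsOrderedRing R]

theorem permanent_nonneg {M : Matrix n n R} (hM : ∀ i, 0 ≤ M i) : 0 ≤ M.permanent := by
  rw [permanent_eq_sum_prod_row]
  exact sum_nonneg fun σ _ => prod_nonneg fun i _ => hM i (σ i)

theorem permanentCofactor_nonneg {M : Matrix n n R} (hM : ∀ i, 0 ≤ M i) (i : n) :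
    0 ≤ M.permanentCofactor i := by
  refine fun j => permanent_nonneg fun k => ?_
  rcases eq_or_ne k i with rfl | hk
  · simp [Pi.single_nonneg.2 zero_le_one]
  · simpa [updateRow_ne hk] using hM k

end OrderedSemiring

theorem continuous_permanent [CommSemiring R] [TopologicalSpace R] [IsTopologicalSemiring R] :
    Continuous (permanent : Matrix n n R → R) := by
  unfold permanent
  fun_prop

theorem norm_permanent_le [NormedCommRing R] [NormOneClass R] (M : Matrix n n R) :
    ‖M.permanent‖ ≤ (M.map (‖·‖)).permanent :=
  (norm_sum_le _ _).trans <| sum_le_sum fun _ _ => norm_prod_le _ _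

end Permanent

theorem sum_sum_updateRow {m α : Type*} [Fintype m] [DecidableEq m] [AddCommGroup α]
    (M : Matrix m n α) (i : m) (v : n → α) :
    ∑ k, ∑ l, M.updateRow i v k l = ∑ k, ∑ l, M k l - ∑ l, M i l + ∑ l, v l := by
  have hrest : ∑ k ∈ univ.erase i, ∑ l, M.updateRow i v k l = ∑ k ∈ univ.erase i, ∑ l, M k l :=
    sum_congr rfl fun k hk => by rw [updateRow_ne (ne_of_mem_erase hk)]
  rw [← add_sum_erase _ (fun k => ∑ l, M.updateRow i v k l) (mem_univ i),
    ← add_sum_erase _ (fun k => ∑ l, M k l) (mem_univ i), updateRow_self, hrest]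
  abel

def nonnegUnitRows (n : Type*) [Fintype n] : Set (Matrix n n ℝ) :=
  {M | ∀ i, 0 ≤ M i ∧ M i ⬝ᵥ M i = 1}

theorem isCompact_nonnegUnitRows : IsCompact (nonnegUnitRows n) := by
  have hclosed : IsClosed (nonnegUnitRows n) := by
    simp only [nonnegUnitRows, Set.ofPred_forall]
    exact isClosed_iInter fun i => (isClosed_le continuous_const (continuous_apply i)).inter
      (isClosed_eq ((continuous_apply i).dotProduct (continuous_apply i)) continuous_const)
  refine (isCompact_univ_pi fun _ => isCompact_univ_pi fun _ =>
    isCompact_Icc (a := (0 : ℝ)) (b := 1)).of_isClosed_subset hclosed fun M hM i _ j _ => ?_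
  have hsq : M i j * M i j ≤ 1 :=
    (hM i).2 ▸ single_le_sum (fun k _ => mul_self_nonneg (M i k)) (mem_univ j)
  have h0 : (0 : ℝ) ≤ M i j := (hM i).1 j
  exact ⟨h0, by nlinarith⟩

section NonnegUnitRows

variable [DecidableEq n]

theorem updateRow_mem_nonnegUnitRows {M : Matrix n n ℝ} (hM : M ∈ nonnegUnitRows n) (i : n)
    {u : n → ℝ} (hu0 : 0 ≤ u) (hu : u ⬝ᵥ u = 1) : M.updateRow i u ∈ nonnegUnitRows n := by
  intro k
  rcases eq_or_ne k i with rfl | hk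
  · simpa using ⟨hu0, hu⟩
  · simpa [updateRow_ne hk] using hM k

theorem permanentCofactor_eq_smul_of_isMaxOn {x : Matrix n n ℝ} (hx : x ∈ nonnegUnitRows n)
    (hmax : IsMaxOn permanent (nonnegUnitRows n) x) (i : n) :
    x.permanentCofactor i = x.permanent • x i := by
  have hself : x i ⬝ᵥ x.permanentCofactor i = x.permanent := by
    rw [← permanent_updateRow_eq_dotProduct, updateRow_eq_self]
  rw [← hself]
  refine eq_dotProduct_smul_of_forall_dotProduct_le (hx i).1 (hx i).2
    (permanentCofactor_nonneg (fun k => (hx k).1) i) fun u hu0 hu => ?_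
  rw [hself, ← permanent_updateRow_eq_dotProduct]
  exact hmax (updateRow_mem_nonnegUnitRows hx i hu0 hu)

theorem exists_mem_nonnegUnitRows_permanent_eq_sum_lt {x : Matrix n n ℝ}
    (hx : x ∈ nonnegUnitRows n) (hmax : IsMaxOn permanent (nonnegUnitRows n) x) {i j : n}
    (hij : x i ≠ x j) :
    ∃ y ∈ nonnegUnitRows n, y.permanent = x.permanent ∧ ∑ k, ∑ l, x k l < ∑ k, ∑ l, y k l := by
  have hne : i ≠ j := fun h => hij (h ▸ rfl)
  obtain ⟨ha0, ha⟩ := hx i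
  obtain ⟨hb0, hb⟩ := hx j
  have hab0 : 0 ≤ x i + x j := add_nonneg ha0 hb0
  have hnorm : (x i + x j) ⬝ᵥ (x i + x j) = 2 + 2 * (x i ⬝ᵥ x j) := by
    simp only [add_dotProduct, dotProduct_add, ha, hb, dotProduct_comm (x j) (x i)]
    ring
  have hpos : 0 < 2 + 2 * (x i ⬝ᵥ x j) := by
    have := dotProduct_nonneg_of_nonneg ha0 hb0
    linarith
  obtain ⟨s, hs0, hs⟩ : ∃ s : ℝ, 0 < s ∧ s ^ 2 = 2 + 2 * (x i ⬝ᵥ x j) :=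
    ⟨_, Real.sqrt_pos.2 hpos, Real.sq_sqrt hpos.le⟩
  have hs_lt : s < 2 := by nlinarith [dotProduct_add_self_lt_four ha hb hij]
  set u := s⁻¹ • (x i + x j) with hu_def
  have hu0 : 0 ≤ u := smul_nonneg (inv_nonneg.2 hs0.le) hab0
  have hu : u ⬝ᵥ u = 1 := by
    rw [hu_def, smul_dotProduct, dotProduct_smul, hnorm, ← hs, smul_eq_mul, smul_eq_mul]
    field_simp
  refine ⟨(x.updateRow j u).updateRow i u,
    updateRow_mem_nonnegUnitRows (updateRow_mem_nonnegUnitRows hx j hu0 hu) i hu0 hu, ?_, ?_⟩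
  · rw [permanent_updateRow_updateRow_smul_add hne
      (permanentCofactor_eq_smul_of_isMaxOn hx hmax), ← hs]
    field_simp
  · have hsum : 0 < ∑ l, (x i + x j) l := by
      refine Fintype.sum_pos (lt_of_le_of_ne hab0 fun h => ?_)
      rw [← h, zero_dotProduct] at hnorm
      linarith
    have hsum_u : ∑ l, u l = s⁻¹ * ∑ l, (x i + x j) l := by simp [hu_def, mul_sum, mul_add]
    rw [sum_sum_updateRow, sum_sum_updateRow, updateRow_ne hne, hsum_u]
    simp only [Pi.add_apply, sum_add_distrib] at hsum ⊢
    have : 1 < 2 * s⁻¹ := by rw [← div_eq_mul_inv, one_lt_div hs0]; exact hs_lt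
    nlinarith

theorem permanent_le_of_mem_nonnegUnitRows {y : Matrix n n ℝ} (hy : y ∈ nonnegUnitRows n) :
    y.permanent ≤ (Fintype.card n).factorial * √((Fintype.card n : ℝ)⁻¹) ^ Fintype.card n := by
  rcases isEmpty_or_nonempty n with hn | ⟨⟨i₀⟩⟩
  · simp [permanent_isEmpty]
  have hK := isCompact_nonnegUnitRows (n := n)
  obtain ⟨z, hz, hzmax⟩ := hK.exists_isMaxOn ⟨y, hy⟩ continuous_permanent.continuousOn
  obtain ⟨x, ⟨hx, hxz⟩, hxmax⟩ :=
    (hK.inter_right (isClosed_eq continuous_permanent continuous_const)).exists_isMaxOn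
      ⟨z, hz, rfl⟩ (f := fun M : Matrix n n ℝ => ∑ k, ∑ l, M k l) (by fun_prop)
  have hxz : x.permanent = z.permanent := hxz
  have hmax : IsMaxOn permanent (nonnegUnitRows n) x := fun w hw => by
    simpa [hxz] using hzmax hw
  have hrows : ∀ i, x i = x i₀ := by
    intro i
    by_contra hij
    obtain ⟨w, hw, hwx, hlt⟩ := exists_mem_nonnegUnitRows_permanent_eq_sum_lt hx hmax hij
    exact (hxmax ⟨hw, hwx.trans hxz⟩).not_gt hlt
  calc y.permanent ≤ x.permanent := hmax hy
    _ = (Fintype.card n).factorial * ∏ j, x i₀ j := permanent_of_rows_eq x hrows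
    _ ≤ _ := by
      gcongr
      exact prod_le_sqrt_inv_card_pow (hx i₀).1 (hx i₀).2

theorem permanent_le_of_nonneg {A : Matrix n n ℝ} (hA : ∀ i, 0 ≤ A i) :
    A.permanent ≤
      (Fintype.card n).factorial * ∏ i, √((Fintype.card n : ℝ)⁻¹ * ∑ j, A i j ^ 2) := by
  by_cases h0 : ∃ i, A i = 0
  · obtain ⟨i, hi⟩ := h0
    rw [permanent_eq_zero_of_row_eq_zero A hi]
    positivity
  push Not at h0
  have hsq (i : n) : ∑ j, A i j ^ 2 = A i ⬝ᵥ A i := by simp [dotProduct, sq]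
  set c : n → ℝ := fun i => √(A i ⬝ᵥ A i) with hc_def
  have hc (i : n) : 0 < c i := Real.sqrt_pos.2 <| lt_of_le_of_ne
    (dotProduct_nonneg_of_nonneg (hA i) (hA i)) (Ne.symm (dotProduct_self_eq_zero.not.2 (h0 i)))
  have hc2 (i : n) : c i ^ 2 = A i ⬝ᵥ A i :=
    Real.sq_sqrt (dotProduct_nonneg_of_nonneg (hA i) (hA i))
  set Y : Matrix n n ℝ := of fun i => (c i)⁻¹ • A i
  have hYi (i : n) : Y i = (c i)⁻¹ • A i := rfl
  have hY : Y ∈ nonnegUnitRows n := fun i => by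
    refine ⟨hYi i ▸ smul_nonneg (inv_nonneg.2 (hc i).le) (hA i), ?_⟩
    rw [hYi, smul_dotProduct, dotProduct_smul, smul_eq_mul, smul_eq_mul, ← hc2]
    field_simp [(hc i).ne']
  have hAY : A = diagonal c * Y := by
    ext i j
    simp [Y, diagonal_mul, (hc i).ne']
  calc A.permanent = (∏ i, c i) * Y.permanent := by rw [hAY, permanent_diagonal_mul]
    _ ≤ (∏ i, c i) * ((Fintype.card n).factorial *
          √((Fintype.card n : ℝ)⁻¹) ^ Fintype.card n) :=
      mul_le_mul_of_nonneg_left (permanent_le_of_mem_nonnegUnitRows hY)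
        (prod_nonneg fun i _ => (hc i).le)
    _ = _ := by
      simp only [hsq, Real.sqrt_mul (inv_nonneg.2 (Nat.cast_nonneg _)), prod_mul_distrib,
        prod_const, card_univ, hc_def]
      ring

end NonnegUnitRows

end Matrix

/-- Let `N ∈ ℕ` and `Z ∈ ℂ^{N×N}` square. Then
`|per(Z)| ≤ N! · ∏_{k=1}^N ((1/N) ∑_{j=1}^N |z_{j,k}|²)^{1/2}`,
where `per(Z) = ∑_{σ ∈ S_N} ∏_k z_{σ(k),k}`. -/
theorem stmt5 (N : ℕ) (Z : Matrix (Fin N) (Fin N) ℂ) :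
    ‖∑ σ : Equiv.Perm (Fin N), ∏ k : Fin N, Z (σ k) k‖ ≤
      (N.factorial : ℝ) * ∏ k : Fin N, Real.sqrt ((N : ℝ)⁻¹ * ∑ j : Fin N, ‖Z j k‖ ^ 2) := by
  calc ‖∑ σ : Equiv.Perm (Fin N), ∏ k : Fin N, Z (σ k) k‖ = ‖(Zᵀ).permanent‖ := by
        rw [permanent_transpose]; rfl
    _ ≤ ((Zᵀ).map (‖·‖)).permanent := norm_permanent_le _
    _ ≤ _ := by
      simpa using permanent_le_of_nonneg (A := (Zᵀ).map (‖·‖)) fun i j => by simp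
end

section
/- Let N ∈ ℕ and n ∈ {1,…,N}. Then N^N / ((N−n)^{N−n} · n^n) ≤ (binom(N,n))², with the convention 0^0 = 1. -/
/-!
Write `N = n + d` and induct on `d`. Passing from `d` to `d + 1` multiplies `binom(N, n)²` by
`(N + 1)² / (d + 1)²`, so the ratio `N^N / (binom(N, n)² n^n d^d)` gets multiplied by `h N / h d`,
where `h M = (M + 1)^(M + 1) / (M^M (M + 1)²)`. Since `h` is antitone (by AM-GM,
`M (M + 2) ≤ (M + 1)²`), the ratio never exceeds its value `1` at `d = 0`.
-/

lemma succ_succ_pow_mul_le (M : ℕ) :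
    (M + 2) ^ (M + 2) * (M ^ M * (M + 1) ^ 2) ≤
      (M + 1) ^ (M + 1) * ((M + 1) ^ (M + 1) * (M + 2) ^ 2) := by
  have amgm : (M * (M + 2)) ^ M ≤ ((M + 1) ^ 2) ^ M := Nat.pow_le_pow_left (by nlinarith) M
  calc (M + 2) ^ (M + 2) * (M ^ M * (M + 1) ^ 2)
      = (M * (M + 2)) ^ M * ((M + 2) ^ 2 * (M + 1) ^ 2) := by rw [mul_pow]; ring
    _ ≤ ((M + 1) ^ 2) ^ M * ((M + 2) ^ 2 * (M + 1) ^ 2) := Nat.mul_le_mul_right _ amgm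
    _ = (M + 1) ^ (M + 1) * ((M + 1) ^ (M + 1) * (M + 2) ^ 2) := by rw [← pow_mul]; ring

/-- Antitonicity of `M ↦ (M + 1)^(M + 1) / (M^M (M + 1)²)`, cleared of denominators. -/
lemma succ_pow_mul_le_of_le {d M : ℕ} (h : d ≤ M) :
    (M + 1) ^ (M + 1) * (d ^ d * (d + 1) ^ 2) ≤ (d + 1) ^ (d + 1) * (M ^ M * (M + 1) ^ 2) := by
  induction M, h using Nat.le_induction with
  | base => exact le_of_eq (by ring)
  | succ M _ ih =>
    refine Nat.le_of_mul_le_mul_left ?_ (by positivity [Nat.pow_self_pos (n := M)] :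
      0 < M ^ M * (M + 1) ^ 2)
    calc M ^ M * (M + 1) ^ 2 * ((M + 1 + 1) ^ (M + 1 + 1) * (d ^ d * (d + 1) ^ 2))
        = (M + 2) ^ (M + 2) * (M ^ M * (M + 1) ^ 2) * (d ^ d * (d + 1) ^ 2) := by ring
      _ ≤ (M + 1) ^ (M + 1) * ((M + 1) ^ (M + 1) * (M + 2) ^ 2) * (d ^ d * (d + 1) ^ 2) :=
          Nat.mul_le_mul_right _ (succ_succ_pow_mul_le M)
      _ = (M + 1) ^ (M + 1) * (d ^ d * (d + 1) ^ 2) * ((M + 1) ^ (M + 1) * (M + 2) ^ 2) := by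
          ring
      _ ≤ (d + 1) ^ (d + 1) * (M ^ M * (M + 1) ^ 2) * ((M + 1) ^ (M + 1) * (M + 2) ^ 2) :=
          Nat.mul_le_mul_right _ ih
      _ = M ^ M * (M + 1) ^ 2 * ((d + 1) ^ (d + 1) * ((M + 1) ^ (M + 1) * (M + 1 + 1) ^ 2)) := by
          ring

lemma choose_add_succ_mul (n d : ℕ) :
    (n + (d + 1)).choose n * (d + 1) = (n + d).choose n * (n + d + 1) := by
  have h := Nat.choose_mul_succ_eq (n + d) n
  rw [show n + d + 1 - n = d + 1 by omega] at h
  rw [← add_assoc, h]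

lemma add_pow_add_le_choose_sq_mul (n d : ℕ) :
    (n + d) ^ (n + d) ≤ ((n + d).choose n) ^ 2 * (d ^ d * n ^ n) := by
  induction d with
  | zero => simp
  | succ d ih =>
    have choose_sq : ((n + (d + 1)).choose n) ^ 2 * (d + 1) ^ 2 =
        ((n + d).choose n) ^ 2 * (n + d + 1) ^ 2 := by
      rw [← mul_pow, ← mul_pow, choose_add_succ_mul]
    refine Nat.le_of_mul_le_mul_left ?_ (by positivity [Nat.pow_self_pos (n := d)] :
      0 < d ^ d * (d + 1) ^ 2)
    calc d ^ d * (d + 1) ^ 2 * (n + (d + 1)) ^ (n + (d + 1))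
        = (n + d + 1) ^ (n + d + 1) * (d ^ d * (d + 1) ^ 2) := by ring_nf
      _ ≤ (d + 1) ^ (d + 1) * ((n + d) ^ (n + d) * (n + d + 1) ^ 2) :=
          succ_pow_mul_le_of_le (Nat.le_add_left d n)
      _ ≤ (d + 1) ^ (d + 1) * (((n + d).choose n) ^ 2 * (d ^ d * n ^ n) * (n + d + 1) ^ 2) :=
          Nat.mul_le_mul_left _ (Nat.mul_le_mul_right _ ih)
      _ = ((n + d).choose n) ^ 2 * (n + d + 1) ^ 2 * ((d + 1) ^ (d + 1) * n ^ n) * d ^ d := by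
          ring
      _ = d ^ d * (d + 1) ^ 2 * (((n + (d + 1)).choose n) ^ 2 * ((d + 1) ^ (d + 1) * n ^ n)) := by
          rw [← choose_sq]; ring

theorem stmt6_general (N n : ℕ) (hnN : n ≤ N) :
    (N : ℝ) ^ N / (((N - n : ℕ) : ℝ) ^ (N - n) * (n : ℝ) ^ n) ≤ (N.choose n : ℝ) ^ 2 := by
  obtain ⟨d, rfl⟩ := Nat.exists_eq_add_of_le hnN
  have denom_pos : (0 : ℝ) < (d : ℝ) ^ d * (n : ℝ) ^ n := by
    exact_mod_cast Nat.mul_pos Nat.pow_self_pos Nat.pow_self_pos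
  rw [Nat.add_sub_cancel_left, div_le_iff₀ denom_pos]
  exact_mod_cast add_pow_add_le_choose_sq_mul n d

/-- Let `N ∈ ℕ`, `n ∈ {1,…,N}`. Then `N^N / ((N−n)^{N−n} · n^n) ≤ (binom(N,n))²`,
with the convention `0^0 = 1`. -/
theorem stmt6 (N n : ℕ) (hn : 1 ≤ n) (hnN : n ≤ N) :
    (N : ℝ) ^ N / (((N - n : ℕ) : ℝ) ^ (N - n) * (n : ℝ) ^ n) ≤ (N.choose n : ℝ) ^ 2 :=
  stmt6_general N n hnN
end

section
/- Let n ∈ ℕ, m ∈ {0,…,n}, and w_{1,k}, w_{2,k} ∈ ℂ for k ∈ {1,…,n}. Then the coefficient of y^m in the polynomial ∏_{k=1}^n (w_{1,k} + w_{2,k}·y) satisfies |[y^m] ∏_{k=1}^n (w_{1,k} + w_{2,k} y)| ≤ binom(n,m) · ((1/n) ∑_{k=1}^n |w_{2,k}|²)^{m/2} · ((1/n) ∑_{k=1}^n |w_{1,k}|²)^{(n−m)/2}. -/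
/-!
Expanding the product, the coefficient is `∑_{|T| = m} ∏_{k ∈ T} w₂ k · ∏_{k ∉ T} w₁ k`.
The triangle inequality and Cauchy–Schwarz over the `m`-subsets `T` bound its norm by
`√(e_m(|w₂|²) · e_{n-m}(|w₁|²))`, where `e_k` is the `k`-th elementary symmetric function.
For nonnegative `x`, `e_k(x) ≤ (n choose k) · (mean x)^k`; this follows by induction on `n`
from the recursion `e_{k+1}(x, y) = e_{k+1}(x) + y · e_k(x)` and the tangent-line inequality
for the convex function `y ↦ y^(k+1)`.
-/

open Polynomial Finset

theorem Polynomial.coeff_prod_C_add_C_mul_X {ι R : Type*} [DecidableEq ι] [CommSemiring R]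
    (s : Finset ι) (a b : ι → R) (m : ℕ) :
    (∏ k ∈ s, (C (a k) + C (b k) * X)).coeff m =
      ∑ t ∈ s.powersetCard m, (∏ k ∈ t, b k) * ∏ k ∈ s \ t, a k := by
  simp_rw [add_comm (C (a _)), prod_add, prod_mul_distrib, prod_const, ← map_prod,
    mul_right_comm _ (X ^ _), ← C_mul, finsetSum_coeff, coeff_C_mul_X_pow, powersetCard_eq_filter,
    sum_filter, @eq_comm _ m]

namespace Finset

variable {ι : Type*} [DecidableEq ι]

theorem sum_powersetCard_succ_insert {M : Type*} [AddCommMonoid M] {j : ι} {s : Finset ι}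
    (hj : j ∉ s) (f : Finset ι → M) (i : ℕ) :
    ∑ t ∈ (insert j s).powersetCard (i + 1), f t =
      ∑ t ∈ s.powersetCard (i + 1), f t + ∑ t ∈ s.powersetCard i, f (insert j t) := by
  have hj_notMem {t} (ht : t ∈ s.powersetCard i) : j ∉ t :=
    fun h ↦ hj ((mem_powersetCard.1 ht).1 h)
  rw [powersetCard_succ_insert hj, sum_union, sum_image]
  · intro t ht t' ht' h
    rw [← erase_insert (hj_notMem ht), h, erase_insert (hj_notMem ht')]
  · simp only [disjoint_left, mem_powersetCard, mem_image]
    rintro _ ⟨hts, -⟩ ⟨t, -, rfl⟩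
    exact hj (hts (mem_insert_self j t))

theorem sum_powersetCard_sdiff {M : Type*} [AddCommMonoid M] (s : Finset ι) (f : Finset ι → M)
    {m : ℕ} (hm : m ≤ s.card) :
    ∑ t ∈ s.powersetCard m, f (s \ t) = ∑ t ∈ s.powersetCard (s.card - m), f t := by
  refine sum_nbij' (s \ ·) (s \ ·) ?_ ?_ ?_ ?_ fun _ _ ↦ rfl <;> intro t ht <;>
    simp only [mem_powersetCard] at ht ⊢ <;> grind

omit [DecidableEq ι] in
theorem card_mul_inv_card_mul_sum (s : Finset ι) (x : ι → ℝ) :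
    (s.card : ℝ) * ((s.card : ℝ)⁻¹ * ∑ i ∈ s, x i) = ∑ i ∈ s, x i := by
  rcases s.eq_empty_or_nonempty with rfl | hs
  · simp
  · rw [mul_inv_cancel_left₀ (by positivity)]

/-- A weak form of Maclaurin's inequality. -/
theorem sum_powersetCard_prod_le_choose_mul_mean_pow (s : Finset ι) {x : ι → ℝ}
    (hx : ∀ i ∈ s, 0 ≤ x i) (m : ℕ) :
    ∑ t ∈ s.powersetCard m, ∏ i ∈ t, x i ≤
      s.card.choose m * ((s.card : ℝ)⁻¹ * ∑ i ∈ s, x i) ^ m := by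
  induction s using Finset.induction_on generalizing m with
  | empty =>
    cases m with
    | zero => simp
    | succ i => simp [powersetCard_eq_empty.2 (card_empty.trans_lt i.succ_pos)]
  | @insert j s hj ih =>
    obtain _ | i := m
    · simp
    have hxs : ∀ k ∈ s, 0 ≤ x k := fun k hk ↦ hx k (mem_insert_of_mem hk)
    have hxj : 0 ≤ x j := hx j (mem_insert_self j s)
    have hcu := s.card_mul_inv_card_mul_sum x
    have hct := (insert j s).card_mul_inv_card_mul_sum x
    rw [card_insert_of_notMem hj, sum_powersetCard_succ_insert hj, sum_insert hj] at *
    set c := s.card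
    set u := (c : ℝ)⁻¹ * ∑ i ∈ s, x i
    set t := ((c + 1 : ℕ) : ℝ)⁻¹ * (x j + ∑ i ∈ s, x i)
    have hu : 0 ≤ u := by positivity [sum_nonneg hxs]
    have ht : 0 ≤ t := by positivity [sum_nonneg hxs]
    have hxj_eq : x j = (c + 1) * t - c * u := by push_cast at hct; linarith
    have pascal : ((c + 1).choose (i + 1) : ℝ) = c.choose i + c.choose (i + 1) := by
      exact_mod_cast Nat.choose_succ_succ c i
    have succ_mul_choose : ((c : ℝ) + 1) * c.choose i = (c + 1).choose (i + 1) * (i + 1) := by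
      exact_mod_cast Nat.add_one_mul_choose_eq c i
    have tangent : u ^ (i + 1) + (i + 1 : ℕ) * u ^ i * (t - u) ≤ t ^ (i + 1) := by
      simpa using pow_add_mul_le_add_pow (b := t - u) hu (by linarith) (i + 1)
    have sum_insert_eq : ∑ S ∈ s.powersetCard i, ∏ k ∈ insert j S, x k =
        x j * ∑ S ∈ s.powersetCard i, ∏ k ∈ S, x k := by
      rw [mul_sum]
      exact sum_congr rfl fun S hS ↦ prod_insert fun h ↦ hj ((mem_powersetCard.1 hS).1 h)
    rw [sum_insert_eq]
    calc ∑ S ∈ s.powersetCard (i + 1), ∏ k ∈ S, x k + x j * ∑ S ∈ s.powersetCard i, ∏ k ∈ S, x k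
        ≤ c.choose (i + 1) * u ^ (i + 1) + x j * (c.choose i * u ^ i) :=
          add_le_add (ih hxs _) (mul_le_mul_of_nonneg_left (ih hxs _) hxj)
      _ = (c + 1).choose (i + 1) * (u ^ (i + 1) + (i + 1 : ℕ) * u ^ i * (t - u)) := by
          rw [hxj_eq]
          push_cast
          linear_combination (t * u ^ i - u ^ (i + 1)) * succ_mul_choose - u ^ (i + 1) * pascal
      _ ≤ (c + 1).choose (i + 1) * t ^ (i + 1) := by gcongr

end Finset

theorem Real.sqrt_pow {x : ℝ} (hx : 0 ≤ x) (n : ℕ) : √(x ^ n) = √x ^ n := by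
  rw [← Real.sqrt_sq (by positivity : 0 ≤ √x ^ n), ← pow_mul, mul_comm, pow_mul, Real.sq_sqrt hx]

theorem Polynomial.norm_coeff_prod_C_add_C_mul_X_le {ι R : Type*} [DecidableEq ι]
    [NormedCommRing R] [NormOneClass R] (s : Finset ι) (a b : ι → R) {m : ℕ} (hm : m ≤ s.card) :
    ‖(∏ k ∈ s, (C (a k) + C (b k) * X)).coeff m‖ ≤
      s.card.choose m * √((s.card : ℝ)⁻¹ * ∑ k ∈ s, ‖b k‖ ^ 2) ^ m *
        √((s.card : ℝ)⁻¹ * ∑ k ∈ s, ‖a k‖ ^ 2) ^ (s.card - m) := by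
  have cauchy_schwarz := Real.sum_mul_le_sqrt_mul_sqrt (s.powersetCard m)
    (fun t ↦ ∏ k ∈ t, ‖b k‖) (fun t ↦ ∏ k ∈ s \ t, ‖a k‖)
  simp only [← prod_pow] at cauchy_schwarz
  rw [coeff_prod_C_add_C_mul_X]
  calc ‖∑ t ∈ s.powersetCard m, (∏ k ∈ t, b k) * ∏ k ∈ s \ t, a k‖
      ≤ ∑ t ∈ s.powersetCard m, (∏ k ∈ t, ‖b k‖) * ∏ k ∈ s \ t, ‖a k‖ :=
        (norm_sum_le _ _).trans <| sum_le_sum fun t _ ↦ (norm_mul_le _ _).trans <|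
          mul_le_mul (norm_prod_le _ _) (norm_prod_le _ _) (norm_nonneg _) (by positivity)
    _ ≤ √(∑ t ∈ s.powersetCard m, ∏ k ∈ t, ‖b k‖ ^ 2) *
          √(∑ t ∈ s.powersetCard m, ∏ k ∈ s \ t, ‖a k‖ ^ 2) := cauchy_schwarz
    _ ≤ √(s.card.choose m * ((s.card : ℝ)⁻¹ * ∑ k ∈ s, ‖b k‖ ^ 2) ^ m) *
          √(s.card.choose m * ((s.card : ℝ)⁻¹ * ∑ k ∈ s, ‖a k‖ ^ 2) ^ (s.card - m)) := by
        gcongr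
        · exact sum_powersetCard_prod_le_choose_mul_mean_pow s (fun _ _ ↦ sq_nonneg _) m
        · rw [sum_powersetCard_sdiff s (fun t ↦ ∏ k ∈ t, ‖a k‖ ^ 2) hm, ← Nat.choose_symm hm]
          exact sum_powersetCard_prod_le_choose_mul_mean_pow s (fun _ _ ↦ sq_nonneg _) _
    _ = _ := by
        rw [Real.sqrt_mul (by positivity), Real.sqrt_mul (by positivity),
          Real.sqrt_pow (by positivity), Real.sqrt_pow (by positivity), mul_mul_mul_comm,
          Real.mul_self_sqrt (by positivity), mul_assoc]

theorem stmt7_general (n : ℕ) (m : ℕ) (hm : m ≤ n) (w₁ w₂ : Fin n → ℂ) :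
    ‖(∏ k : Fin n, (Polynomial.C (w₁ k) + Polynomial.C (w₂ k) * Polynomial.X)).coeff m‖ ≤
      (n.choose m : ℝ) * ((n : ℝ)⁻¹ * ∑ k, ‖w₂ k‖ ^ 2) ^ ((m : ℝ) / 2) *
        ((n : ℝ)⁻¹ * ∑ k, ‖w₁ k‖ ^ 2) ^ (((n : ℝ) - m) / 2) := by
  have h := norm_coeff_prod_C_add_C_mul_X_le univ w₁ w₂ (m := m) (by simpa using hm)
  simp only [card_univ, Fintype.card_fin] at h
  rw [Real.rpow_div_two_eq_sqrt _ (by positivity), Real.rpow_div_two_eq_sqrt _ (by positivity),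
    ← Nat.cast_sub hm, Real.rpow_natCast, Real.rpow_natCast]
  exact h

/-- Let `n ∈ ℕ`, `m ∈ {0,…,n}`, and `w_{1,k}, w_{2,k} ∈ ℂ` for `k ∈ {1,…,n}`. Then
`|[y^m] ∏_{k=1}^n (w_{1,k} + w_{2,k} y)| ≤
  binom(n,m) · ((1/n) ∑ |w_{2,k}|²)^{m/2} · ((1/n) ∑ |w_{1,k}|²)^{(n−m)/2}`. -/
theorem stmt7 (n : ℕ) (hn : 1 ≤ n) (m : ℕ) (hm : m ≤ n) (w₁ w₂ : Fin n → ℂ) :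
    ‖(∏ k : Fin n, (Polynomial.C (w₁ k) + Polynomial.C (w₂ k) * Polynomial.X)).coeff m‖ ≤
      (n.choose m : ℝ) * ((n : ℝ)⁻¹ * ∑ k, ‖w₂ k‖ ^ 2) ^ ((m : ℝ) / 2) *
        ((n : ℝ)⁻¹ * ∑ k, ‖w₁ k‖ ^ 2) ^ (((n : ℝ) - m) / 2) :=
  stmt7_general n m hm w₁ w₂
end

section
/- For every r ∈ ℤ_{≥0} and all t, x ∈ [0,1], one has ∑_{m=0}^r (m+1)^t · x^m ≤ ((1 − x^{r+1})/(1 − x))^{1+t}, where for x = 1 the right-hand side is interpreted as the limit (r+1)^{1+t}. -/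
open Finset

/-- Sum-swap identity: `∑_{m<n} (m+1) x^m = ∑_{k<n} ∑_{m∈[k,n)} x^m`. -/
lemma swap_aux (x : ℝ) : ∀ n : ℕ,
    ∑ m ∈ range n, ((m : ℝ) + 1) * x ^ m =
      ∑ k ∈ range n, ∑ m ∈ Finset.Ico k n, x ^ m := by
  intro n
  induction n with
  | zero => simp
  | succ n ih =>
    rw [Finset.sum_range_succ, ih, Finset.sum_range_succ]
    have h1 : ∀ k ∈ range n, ∑ m ∈ Finset.Ico k (n+1), x ^ m
        = (∑ m ∈ Finset.Ico k n, x ^ m) + x ^ n := by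
      intro k hk
      rw [Finset.sum_Ico_succ_top (le_of_lt (Finset.mem_range.mp hk))]
    rw [Finset.sum_congr rfl h1, Finset.sum_add_distrib]
    have h2 : ∑ m ∈ Finset.Ico n (n+1), x ^ m = x ^ n := by simp
    rw [h2]
    push_cast
    ring_nf
    rw [Finset.sum_const, Finset.card_range]
    ring

lemma sq_bound (x : ℝ) (hx0 : 0 ≤ x) (n : ℕ) :
    ∑ m ∈ range n, ((m : ℝ) + 1) * x ^ m ≤ (∑ m ∈ range n, x ^ m) ^ 2 := by
  rw [swap_aux, sq, Finset.sum_mul]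
  apply Finset.sum_le_sum
  intro k hk
  rw [Finset.sum_Ico_eq_sum_range]
  have : ∑ m ∈ range (n - k), x ^ (k + m) = x ^ k * ∑ m ∈ range (n - k), x ^ m := by
    rw [Finset.mul_sum]; exact Finset.sum_congr rfl fun m _ => pow_add x k m
  rw [this]
  apply mul_le_mul_of_nonneg_left _ (pow_nonneg hx0 k)
  apply Finset.sum_le_sum_of_subset_of_nonneg
  · exact Finset.range_subset_range.mpr (Nat.sub_le n k)
  · intro i _ _; exact pow_nonneg hx0 i

lemma key (n : ℕ) (hn : 0 < n) (x : ℝ) (hx0 : 0 ≤ x) (t : ℝ) (ht0 : 0 ≤ t) (ht1 : t ≤ 1) :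
    ∑ m ∈ range n, ((m : ℝ) + 1) ^ t * x ^ m ≤
      (∑ m ∈ range n, x ^ m) ^ (1 + t) := by
  set S : ℝ := ∑ m ∈ range n, x ^ m with hS
  have hS1 : 1 ≤ S := by
    have := Finset.single_le_sum (f := fun m => x ^ m)
      (fun i _ => pow_nonneg hx0 i) (Finset.mem_range.mpr hn)
    simpa using this
  have hSpos : 0 < S := lt_of_lt_of_le one_pos hS1
  rcases eq_or_lt_of_le ht0 with h0 | h0
  · -- t = 0
    subst h0
    simp only [Real.rpow_zero, one_mul, add_zero, Real.rpow_one]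
    exact le_of_eq rfl
  · -- 0 < t
    have hp : (1:ℝ) ≤ 1 / t := by
      rw [le_div_iff₀ h0]; simpa using ht1
    have holder := Real.inner_le_weight_mul_Lp_of_nonneg (range n) hp
      (fun m => x ^ m) (fun m => ((m : ℝ) + 1) ^ t)
      (fun m => pow_nonneg hx0 m)
      (fun m => Real.rpow_nonneg (by positivity) t)
    have hinv : (1 / t : ℝ)⁻¹ = t := by
      field_simp
    rw [hinv] at holder
    have hcomm : ∑ m ∈ range n, x ^ m * ((m : ℝ) + 1) ^ t
        = ∑ m ∈ range n, ((m : ℝ) + 1) ^ t * x ^ m := by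
      exact Finset.sum_congr rfl fun m _ => mul_comm _ _
    rw [hcomm] at holder
    have hexp : ∀ m : ℕ, (((m : ℝ) + 1) ^ t) ^ (1 / t : ℝ) = (m : ℝ) + 1 := by
      intro m
      rw [← Real.rpow_mul (by positivity), mul_one_div, div_self (ne_of_gt h0),
        Real.rpow_one]
    have hsum2 : ∑ m ∈ range n, x ^ m * (((m : ℝ) + 1) ^ t) ^ (1 / t : ℝ)
        = ∑ m ∈ range n, ((m : ℝ) + 1) * x ^ m := by
      refine Finset.sum_congr rfl fun m _ => ?_
      rw [hexp m, mul_comm]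
    rw [hsum2] at holder
    refine holder.trans ?_
    have hmono : (∑ m ∈ range n, ((m : ℝ) + 1) * x ^ m) ^ t ≤ (S ^ 2) ^ t := by
      apply Real.rpow_le_rpow _ (sq_bound x hx0 n) (le_of_lt h0)
      apply Finset.sum_nonneg
      intro m _
      positivity
    calc S ^ (1 - t) * (∑ m ∈ range n, ((m : ℝ) + 1) * x ^ m) ^ t
        ≤ S ^ (1 - t) * (S ^ 2) ^ t := by
          apply mul_le_mul_of_nonneg_left hmono (Real.rpow_nonneg hSpos.le _)
      _ = S ^ (1 + t) := by
          rw [← Real.rpow_natCast S 2, ← Real.rpow_mul hSpos.le,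
            ← Real.rpow_add hSpos]
          norm_num
          ring_nf

/-- For every `r ∈ ℤ_{≥0}` and all `t, x ∈ [0,1]`, one has
`∑_{m=0}^r (m+1)^t · x^m ≤ ((1 − x^{r+1})/(1 − x))^{1+t}`,
where for `x = 1` the right-hand side is interpreted as the limit `(r+1)^{1+t}`. -/
theorem stmt9 (r : ℕ) (t x : ℝ) (ht : t ∈ Set.Icc (0:ℝ) 1) (hx : x ∈ Set.Icc (0:ℝ) 1) :
    ∑ m ∈ Finset.range (r + 1), ((m : ℝ) + 1) ^ t * x ^ m ≤
      if x = 1 then ((r : ℝ) + 1) ^ (1 + t)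
      else ((1 - x ^ (r + 1)) / (1 - x)) ^ (1 + t) := by
  obtain ⟨ht0, ht1⟩ := ht
  obtain ⟨hx0, hx1⟩ := hx
  have h := key (r + 1) (Nat.succ_pos r) x hx0 t ht0 ht1
  by_cases hx1' : x = 1
  · rw [if_pos hx1']
    subst hx1'
    simpa using h
  · rw [if_neg hx1']
    have hgeom : ∑ m ∈ Finset.range (r + 1), x ^ m = (1 - x ^ (r + 1)) / (1 - x) := by
      rw [geom_sum_eq hx1']
      rw [div_eq_div_iff (sub_ne_zero.mpr hx1') (sub_ne_zero.mpr (Ne.symm hx1'))]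
      ring
    rw [hgeom] at h
    exact h
end

section
/- Let ℓ, m, N ∈ ℕ with ℓ ≤ m ≤ N, and let C_ℓ = (e^ℓ · ℓ! / ℓ^{ℓ+1/2})^{1/2}. Then N^{N/2} / ((N−m)^{(N−m)/2} · m^{m/2+1/4} · binom(N,m)^{1/2}) ≤ C_ℓ, with the convention 0^0 = 1. -/
/-!
Both sides are square roots, so it suffices to compare the radicands. Since `(1 + 1/n)^n ≤ e`,
the sequence `n^n / (e^n n!)` is antitone; comparing its values at `N` and `N - m` gives
`N^N / ((N - m)^(N - m) binom(N, m)) ≤ e^m m!`. What remains, `e^m m! / m^(m + 1/2)`, is `√2`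
times Stirling's sequence `m! / (√(2m) (m/e)^m)`, which is antitone, hence at most its value at `ℓ`.
-/

open Real Nat Stirling

lemma add_one_pow_le_exp_one_mul_pow (n : ℕ) : ((n : ℝ) + 1) ^ n ≤ exp 1 * (n : ℝ) ^ n := by
  rcases eq_or_ne n 0 with rfl | hn
  · simp [one_le_exp zero_le_one]
  calc ((n : ℝ) + 1) ^ n = (1 + (n : ℝ)⁻¹) ^ n * (n : ℝ) ^ n := by
        rw [← mul_pow, add_mul, one_mul, inv_mul_cancel₀ (by exact_mod_cast hn), add_comm]
    _ ≤ exp 1 * (n : ℝ) ^ n := by gcongr; exact one_add_inv_pow_le_exp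

lemma antitone_pow_self_div_exp_mul_factorial :
    Antitone fun n : ℕ ↦ (n : ℝ) ^ n / (exp n * n !) := by
  refine antitone_nat_of_succ_le fun n ↦ ?_
  rw [div_le_div_iff₀ (by positivity) (by positivity)]
  push_cast [factorial_succ, pow_succ, exp_add]
  calc ((n : ℝ) + 1) ^ n * (n + 1) * (exp n * n !)
      = ((n : ℝ) + 1) ^ n * (exp n * n ! * (n + 1)) := by ring
    _ ≤ exp 1 * (n : ℝ) ^ n * (exp n * n ! * (n + 1)) := by
        gcongr; exact add_one_pow_le_exp_one_mul_pow n
    _ = (n : ℝ) ^ n * (exp n * exp 1 * ((n + 1) * n !)) := by ring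

lemma add_pow_add_div_pow_mul_choose_le (m k : ℕ) :
    ((m : ℝ) + k) ^ (m + k) / ((k : ℝ) ^ k * (m + k).choose m) ≤ exp m * m ! := by
  have h := antitone_pow_self_div_exp_mul_factorial (Nat.le_add_left k m)
  have hfac : ((m + k)! : ℝ) = m ! * k ! * (m + k).choose m := by
    exact_mod_cast (add_choose_mul_factorial_mul_factorial m k).symm.trans
      (by rw [choose_symm_add]; ring)
  have hkk : (0 : ℝ) < (k : ℝ) ^ k := by exact_mod_cast Nat.pow_self_pos
  have hchoose : (0 : ℝ) < (m + k).choose m := by exact_mod_cast choose_pos (le_add_right m k)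
  rw [div_le_div_iff₀ (by positivity) (by positivity), hfac] at h
  push_cast [exp_add] at h
  rw [div_le_iff₀ (by positivity)]
  refine le_of_mul_le_mul_right ?_ (by positivity : (0 : ℝ) < exp k * k !)
  calc ((m : ℝ) + k) ^ (m + k) * (exp k * k !) ≤ _ := h
    _ = _ := by ring

lemma exp_mul_factorial_div_rpow_eq_sqrt_two_mul_stirlingSeq {n : ℕ} (hn : n ≠ 0) :
    exp n * n ! / (n : ℝ) ^ ((n : ℝ) + 1 / 2) = √2 * stirlingSeq n := by
  have hn0 : (0 : ℝ) < n := by positivity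
  rw [stirlingSeq, rpow_add hn0, rpow_natCast, ← sqrt_eq_rpow, sqrt_mul zero_le_two, div_pow,
    ← exp_one_pow]
  field_simp

lemma antitoneOn_exp_mul_factorial_div_rpow :
    AntitoneOn (fun n : ℕ ↦ exp n * n ! / (n : ℝ) ^ ((n : ℝ) + 1 / 2)) (Set.Ici 1) := by
  rintro a ha b hb hab
  obtain ⟨a, rfl⟩ := Nat.exists_eq_add_of_le' ha
  obtain ⟨b, rfl⟩ := Nat.exists_eq_add_of_le' hb
  simp only [exp_mul_factorial_div_rpow_eq_sqrt_two_mul_stirlingSeq (succ_ne_zero _)]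
  gcongr
  exact stirlingSeq'_antitone (Nat.le_of_succ_le_succ hab)

lemma rpow_div_two_eq_sqrt_rpow {x : ℝ} (y : ℝ) (hx : 0 ≤ x) : x ^ (y / 2) = √(x ^ y) := by
  rw [sqrt_eq_rpow, ← rpow_mul hx, div_eq_mul_one_div]

/-- Let `ℓ, m, N ∈ ℕ` with `ℓ ≤ m ≤ N`, and let `C_ℓ = (e^ℓ·ℓ!/ℓ^{ℓ+1/2})^{1/2}`. Then
`N^{N/2} / ((N−m)^{(N−m)/2} · m^{m/2+1/4} · binom(N,m)^{1/2}) ≤ C_ℓ`,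
with the convention `0^0 = 1`. -/
theorem stmt10 (ℓ m N : ℕ) (hℓ1 : 1 ≤ ℓ) (hℓm : ℓ ≤ m) (hmN : m ≤ N) :
    (N : ℝ) ^ ((N : ℝ) / 2) /
      (((N : ℝ) - m) ^ (((N : ℝ) - m) / 2) * (m : ℝ) ^ ((m : ℝ) / 2 + 1 / 4) *
        Real.sqrt (N.choose m)) ≤
      Real.sqrt (Real.exp ℓ * ℓ.factorial / (ℓ : ℝ) ^ ((ℓ : ℝ) + 1 / 2)) := by
  obtain ⟨k, rfl⟩ := Nat.exists_eq_add_of_le hmN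
  have hsub : ((m + k : ℕ) : ℝ) - m = k := by push_cast; ring
  rw [hsub, show (m : ℝ) / 2 + 1 / 4 = ((m : ℝ) + 1 / 2) / 2 by ring,
    rpow_div_two_eq_sqrt_rpow _ (by positivity), rpow_div_two_eq_sqrt_rpow _ (by positivity),
    rpow_div_two_eq_sqrt_rpow _ (by positivity), ← sqrt_mul (by positivity),
    ← sqrt_mul (by positivity), ← sqrt_div' _ (by positivity), rpow_natCast, rpow_natCast]
  refine sqrt_le_sqrt ?_
  calc _ = ((m : ℝ) + k) ^ (m + k) / ((k : ℝ) ^ k * (m + k).choose m) /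
        (m : ℝ) ^ ((m : ℝ) + 1 / 2) := by push_cast; ring
    _ ≤ exp m * m ! / (m : ℝ) ^ ((m : ℝ) + 1 / 2) := by
        gcongr; exact add_pow_add_div_pow_mul_choose_le m k
    _ ≤ exp ℓ * ℓ ! / (ℓ : ℝ) ^ ((ℓ : ℝ) + 1 / 2) :=
        antitoneOn_exp_mul_factorial_div_rpow hℓ1 (hℓ1.trans hℓm) hℓm
end

section
/- For all m, N ∈ ℕ with 1 ≤ m ≤ N, one has N^N / ((N−m)^{N−m} · binom(N,m)) ≤ e^m · m!, with the convention 0^0 = 1. -/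
lemma lemA11 (n : ℕ) : ((n:ℝ)+1) ^ (n+1) ≤ Real.exp 1 * ((n:ℝ)+1) * (n:ℝ)^n := by
  rcases Nat.eq_zero_or_pos n with h|h
  · subst h; simpa using Real.one_le_exp (le_refl 0) |>.trans (by
      have := Real.one_le_exp (le_refl 0); nlinarith [Real.add_one_le_exp (1:ℝ)])
  · have hn : (0:ℝ) < n := by exact_mod_cast h
    have h2 : (1 + 1/(n:ℝ))^n ≤ Real.exp 1 := by
      have h3 := Real.add_one_le_exp (1/(n:ℝ))
      calc (1+1/(n:ℝ))^n ≤ (Real.exp (1/n))^n := by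
            apply pow_le_pow_left₀ (by positivity) (by linarith)
        _ = Real.exp 1 := by rw [← Real.exp_nat_mul]; congr 1; field_simp
    have h1' : ((n:ℝ)+1)^n ≤ Real.exp 1 * (n:ℝ)^n := by
      have heq : ((n:ℝ)+1) = (n:ℝ) * (1 + 1/n) := by field_simp
      rw [heq, mul_pow]
      calc (n:ℝ)^n * (1+1/n)^n ≤ (n:ℝ)^n * Real.exp 1 :=
            mul_le_mul_of_nonneg_left h2 (by positivity)
        _ = Real.exp 1 * (n:ℝ)^n := mul_comm _ _
    calc ((n:ℝ)+1)^(n+1) = ((n:ℝ)+1) * ((n:ℝ)+1)^n := by ring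
      _ ≤ ((n:ℝ)+1) * (Real.exp 1 * (n:ℝ)^n) :=
          mul_le_mul_of_nonneg_left h1' (by positivity)
      _ = Real.exp 1 * ((n:ℝ)+1) * (n:ℝ)^n := by ring

lemma lemB11 (k d : ℕ) :
    ((k+d : ℕ):ℝ)^(k+d) * (k.factorial : ℝ) ≤
      Real.exp d * (k:ℝ)^k * ((k+d).factorial : ℝ) := by
  induction d with
  | zero => simp
  | succ d ih =>
    have hA := lemA11 (k+d)
    have hAc : ((k+(d+1) : ℕ):ℝ)^(k+(d+1)) ≤
        Real.exp 1 * (((k+d:ℕ):ℝ)+1) * ((k+d:ℕ):ℝ)^(k+d) := by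
      have : (k+(d+1)) = ((k+d)+1) := by ring
      rw [this]; push_cast; push_cast at hA; convert hA using 2 <;> push_cast <;> ring
    have hfac : (((k+(d+1)).factorial : ℕ):ℝ) = (((k+d:ℕ):ℝ)+1) * ((k+d).factorial : ℝ) := by
      have : (k+(d+1)) = (k+d)+1 := by ring
      rw [this, Nat.factorial_succ]; push_cast; ring
    have hexp : Real.exp ((d+1:ℕ):ℝ) = Real.exp 1 * Real.exp d := by
      push_cast; rw [← Real.exp_add]; ring_nf
    have hk : (0:ℝ) ≤ (k.factorial : ℝ) := by positivity
    have he : (0:ℝ) < Real.exp 1 := Real.exp_pos 1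
    have hpos : (0:ℝ) ≤ ((k+d:ℕ):ℝ)+1 := by positivity
    calc ((k+(d+1) : ℕ):ℝ)^(k+(d+1)) * (k.factorial : ℝ)
        ≤ (Real.exp 1 * (((k+d:ℕ):ℝ)+1)) * (((k+d:ℕ):ℝ)^(k+d) * (k.factorial : ℝ)) := by
          nlinarith [mul_le_mul_of_nonneg_right hAc hk]
      _ ≤ (Real.exp 1 * (((k+d:ℕ):ℝ)+1)) * (Real.exp d * (k:ℝ)^k * ((k+d).factorial : ℝ)) := by
          apply mul_le_mul_of_nonneg_left ih (by positivity)
      _ = Real.exp ((d+1:ℕ):ℝ) * (k:ℝ)^k * (((k+(d+1)).factorial : ℕ):ℝ) := by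
          rw [hfac, hexp]; push_cast; ring
    
/-- For all `m, N ∈ ℕ` with `1 ≤ m ≤ N`, one has
`N^N / ((N−m)^{N−m} · binom(N,m)) ≤ e^m · m!`, with the convention `0^0 = 1`. -/
theorem stmt11 (m N : ℕ) (h1 : 1 ≤ m) (hmN : m ≤ N) :
    (N : ℝ) ^ N / (((N - m : ℕ) : ℝ) ^ (N - m) * (N.choose m : ℝ)) ≤
      Real.exp m * m.factorial := by
  set k := N - m with hk
  have hN : N = k + m := by omega
  have hch : (N.choose m : ℝ) * (m.factorial : ℝ) * (k.factorial : ℝ) = (N.factorial : ℝ) := by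
    have := Nat.choose_mul_factorial_mul_factorial hmN
    rw [hk] at *
    exact_mod_cast this
  have hB := lemB11 k m
  rw [← hN] at hB
  have hchpos : (0:ℝ) < (N.choose m : ℝ) := by
    exact_mod_cast Nat.choose_pos hmN
  have hkpos : (0:ℝ) < (k:ℝ)^k := by
    rcases Nat.eq_zero_or_pos k with h|h
    · simp [h]
    · positivity
  have hfacpos : (0:ℝ) < (k.factorial : ℝ) := by exact_mod_cast k.factorial_pos
  rw [div_le_iff₀ (by positivity)]
  -- goal : N^N ≤ exp m * m! * (k^k * choose)
  have key : (N:ℝ)^N * (k.factorial : ℝ) ≤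
      Real.exp m * (m.factorial : ℝ) * ((k:ℝ)^k * (N.choose m : ℝ)) * (k.factorial : ℝ) := by
    calc (N:ℝ)^N * (k.factorial : ℝ) ≤ Real.exp m * (k:ℝ)^k * (N.factorial : ℝ) := hB
      _ = Real.exp m * (m.factorial : ℝ) * ((k:ℝ)^k * (N.choose m : ℝ)) * (k.factorial : ℝ) := by
          rw [← hch]; ring
  exact le_of_mul_le_mul_right key hfacpos
end

section
/- Let N ∈ ℕ, n ∈ {1,…,N}, and Z = (z_{j,k}) ∈ ℂ^{N×n}. With the notation z̃_k, a_{j,k}, U_j(x) and G_m(Z) as defined, the exact identity ((N−n)!/N!)·per(Z) = ∑_{m=0}^n G_m(Z) holds. -/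
open scoped BigOperators

/-- The permanent of a rectangular complex matrix `Z ∈ ℂ^{N×n}` (`n ≤ N`):
`per(Z) = ∑_{j ∈ [N]^n_≠} ∏_{k=1}^n z_{j_k,k}`, i.e. the sum over injective
maps `Fin n → Fin N`. -/
noncomputable def rectPermanent {N n : ℕ} (Z : Matrix (Fin N) (Fin n) ℂ) : ℂ :=
  ∑ j ∈ Finset.univ.filter (fun j : Fin n → Fin N => Function.Injective j),
    ∏ k : Fin n, Z (j k) k

/-- `z̃_k = (1/N) ∑_{j=1}^N z_{j,k}`, the `k`-th column mean. -/
noncomputable def ztilde {N n : ℕ} (Z : Matrix (Fin N) (Fin n) ℂ) (k : Fin n) : ℂ :=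
  (N : ℂ)⁻¹ * ∑ j : Fin N, Z j k

/-- `a_{j,k} = z_{j,k} − z̃_k`. -/
noncomputable def aEnt {N n : ℕ} (Z : Matrix (Fin N) (Fin n) ℂ) (j : Fin N) (k : Fin n) : ℂ :=
  Z j k - ztilde Z k

/-- `G_m(Z) = ((N−m)!/((n−m)!·N!)) · [x_1⋯x_n]((∏_j (1+U_j(x)))·(∑_k z̃_k x_k)^{n−m})`,
where `U_j(x) = ∑_k a_{j,k} x_k` and `[x_1⋯x_n]` denotes the coefficient of the
monomial `x_1⋯x_n` (the `MvPolynomial` coefficient at exponent `∑ k, Finsupp.single k 1`). -/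
noncomputable def GZ {N n : ℕ} (Z : Matrix (Fin N) (Fin n) ℂ) (m : ℕ) : ℂ :=
  ((N - m).factorial : ℂ) / (((n - m).factorial : ℂ) * (N.factorial : ℂ)) *
    MvPolynomial.coeff (∑ k : Fin n, Finsupp.single k 1)
      ((∏ j : Fin N,
          (1 + ∑ k : Fin n, MvPolynomial.C (aEnt Z j k) * MvPolynomial.X k)) *
        (∑ k : Fin n, MvPolynomial.C (ztilde Z k) * MvPolynomial.X k) ^ (n - m))

/-- `H_ℓ(Z) = ∑_{m=0}^ℓ G_m(Z)`. -/
noncomputable def HZ {N n : ℕ} (Z : Matrix (Fin N) (Fin n) ℂ) (ℓ : ℕ) : ℂ :=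
  ∑ m ∈ Finset.range (ℓ + 1), GZ Z m

/-- `C_ℓ = (e^ℓ · ℓ! / ℓ^{ℓ+1/2})^{1/2}`. -/
noncomputable def Cconst (ℓ : ℕ) : ℝ :=
  Real.sqrt (Real.exp ℓ * ℓ.factorial / (ℓ : ℝ) ^ ((ℓ : ℝ) + 1 / 2))

/-- `α = (1/(nN)) ∑_{j=1}^N ∑_{k=1}^n |a_{j,k}|²`. -/
noncomputable def alphaZ {N n : ℕ} (Z : Matrix (Fin N) (Fin n) ℂ) : ℝ :=
  ((n : ℝ) * N)⁻¹ * ∑ j : Fin N, ∑ k : Fin n, ‖aEnt Z j k‖ ^ 2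

/-- `β = (1/n) ∑_{k=1}^n |z̃_k|²`. -/
noncomputable def betaZ {N n : ℕ} (Z : Matrix (Fin N) (Fin n) ℂ) : ℝ :=
  (n : ℝ)⁻¹ * ∑ k : Fin n, ‖ztilde Z k‖ ^ 2

/-- `γ(d) = (nα/N)·min{dn, 1/(1−β)}`; for `β = 1` the quantity `1/(1−β)` is `+∞`,
so the minimum is interpreted as `dn`. `γ = γ(1)`. -/
noncomputable def gammaZ {N n : ℕ} (Z : Matrix (Fin N) (Fin n) ℂ) (d : ℝ) : ℝ :=
  (n : ℝ) * alphaZ Z / N *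
    (if betaZ Z < 1 then min (d * n) (1 / (1 - betaZ Z)) else d * n)

/-!
The permanent is the coefficient of `x_1⋯x_n` in `∏_j (1 + ∑_k z_{j,k} x_k)`. Writing each factor
as `(1 + S) + U_j` with `S = ∑_k z̃_k x_k` and `U_j = ∑_k a_{j,k} x_k`, the product becomes
`∑_W (∏_{j ∈ W} U_j) (1 + S)^{N - |W|}`. All forms are homogeneous of degree one, so only the term
`binom(N - |W|, n - |W|) S^{n - |W|}` of `(1 + S)^{N - |W|}` reaches the degree `n` coefficient; the
same degree count turns the coefficient in `G_m` into the sum over `|W| = m`. The identity is then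
`(N - n)!/N! · binom(N - m, n - m) = (N - m)!/((n - m)! N!)`.
-/

open Finset Function
open scoped Nat

section PartialInv

variable {ι κ : Type*}

theorem sum_elim_single_apply [Fintype ι] [DecidableEq κ] (g : ι → Option κ) (k : κ) :
    (∑ i, (g i).elim 0 fun k => Finsupp.single k 1) k = #{i | g i = some k} := by
  rw [Finsupp.finsetSum_apply, card_filter]
  refine sum_congr rfl fun i _ => ?_
  cases g i <;> simp [Finsupp.single_apply]

theorem sum_elim_single_eq_iff [Fintype ι] [Fintype κ] [DecidableEq κ] (g : ι → Option κ) :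
    (∑ i, (g i).elim 0 fun k => Finsupp.single k 1) = ∑ k, Finsupp.single k 1 ↔
      ∀ k, ∃! i, g i = some k := by
  refine Finsupp.ext_iff.trans (forall_congr' fun k => ?_)
  rw [sum_elim_single_apply, Finsupp.finsetSum_apply,
    Fintype.sum_eq_single k fun i hi => by simp [hi], Finsupp.single_eq_same, card_eq_one]
  simp [eq_singleton_iff_unique_mem, ExistsUnique]

theorem existsUnique_partialInv_eq_some {f : κ → ι} (hf : Injective f) (k : κ) :
    ∃! i, partialInv f i = some k :=
  ⟨f k, partialInv_left hf k, fun i hi => ((hf.isPartialInv k i).1 hi).symm⟩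

theorem exists_injective_partialInv_eq {g : ι → Option κ} (hg : ∀ k, ∃! i, g i = some k) :
    ∃ f : κ → ι, Injective f ∧ partialInv f = g := by
  choose f hf huniq using hg
  have hinj : Injective f := fun k k' h =>
    Option.some_injective _ ((hf k).symm.trans (h ▸ hf k'))
  refine ⟨f, hinj, funext fun i => ?_⟩
  cases hgi : g i with
  | some k => rw [huniq k i hgi, partialInv_left hinj]
  | none =>
    cases hfi : partialInv f i with
    | none => rfl
    | some k =>
      have := hf k
      rw [(hinj.isPartialInv k i).1 hfi, hgi] at this
      cases this

theorem prod_partialInv_elim [Fintype ι] [Fintype κ] {M : Type*} [CommMonoid M] {f : κ → ι}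
    (hf : Injective f) (c : ι → κ → M) : ∏ i, (partialInv f i).elim 1 (c i) = ∏ k, c (f k) k := by
  refine (Fintype.prod_of_injective f hf _ _ (fun i hi => ?_) fun k => ?_).symm
  · cases hfi : partialInv f i with
    | none => rfl
    | some k => exact absurd ⟨k, (hf.isPartialInv k i).1 hfi⟩ hi
  · rw [partialInv_left hf]; rfl

end PartialInv

namespace Finset

variable {ι R : Type*}

theorem prod_add_eq_sum_powerset_mul_pow [CommSemiring R] (s : Finset ι) (a : R) (f : ι → R) :
    ∏ i ∈ s, (a + f i) = ∑ t ∈ s.powerset, (∏ i ∈ t, f i) * a ^ (#s - #t) := by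
  classical
  simp_rw [add_comm a, prod_add, prod_const]
  exact sum_congr rfl fun t ht => by rw [card_sdiff_of_subset (mem_powerset.1 ht)]

theorem sum_powerset_eq_sum_range_sum_powersetCard [AddCommMonoid R] (s : Finset ι) (n : ℕ)
    {f : Finset ι → R} (hf : ∀ t ⊆ s, n < #t → f t = 0) :
    ∑ t ∈ s.powerset, f t = ∑ m ∈ range (n + 1), ∑ t ∈ s.powersetCard m, f t := by
  rw [← sum_filter_of_ne (p := fun t => #t ≤ n) fun t ht hft =>
      not_lt.1 fun hn => hft (hf t (mem_powerset.1 ht) hn),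
    ← sum_fiberwise_of_maps_to (g := card) (t := range (n + 1)) fun t ht => by
      simp only [mem_filter, mem_range] at ht ⊢; omega]
  refine sum_congr rfl fun m hm => sum_congr (ext fun t => ?_) fun _ _ => rfl
  simp only [mem_filter, mem_powerset, mem_powersetCard, mem_range] at hm ⊢
  constructor
  · rintro ⟨⟨hts, -⟩, rfl⟩; exact ⟨hts, rfl⟩
  · rintro ⟨hts, rfl⟩; exact ⟨⟨hts, by omega⟩, rfl⟩

end Finset

theorem factorial_div_mul_choose {R : Type*} [Field R] [CharZero R] {m n N : ℕ} (hmn : m ≤ n)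
    (hnN : n ≤ N) :
    ((N - n)! : R) / N ! * (N - m).choose (n - m) = (N - m)! / ((n - m)! * N !) := by
  have key := Nat.choose_mul_factorial_mul_factorial (Nat.sub_le_sub_right hnN m)
  rw [show N - m - (n - m) = N - n by omega] at key
  have hN : (N ! : R) ≠ 0 := Nat.cast_ne_zero.2 N.factorial_ne_zero
  have hnm : ((n - m)! : R) ≠ 0 := Nat.cast_ne_zero.2 (n - m).factorial_ne_zero
  field_simp
  exact_mod_cast (by rw [← key]; ring : (N - n)! * (N - m).choose (n - m) * (n - m)! = (N - m)!)

namespace MvPolynomial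

variable {R σ ι κ : Type*} [CommSemiring R]

noncomputable def linearForm [Fintype σ] (c : σ → R) : MvPolynomial σ R :=
  ∑ k, C (c k) * X k

theorem isHomogeneous_linearForm [Fintype σ] (c : σ → R) : (linearForm c).IsHomogeneous 1 :=
  IsHomogeneous.sum _ _ _ fun k _ => isHomogeneous_C_mul_X _ k

theorem linearForm_add [Fintype σ] (c c' : σ → R) :
    linearForm (c + c') = linearForm c + linearForm c' := by
  simp only [linearForm, Pi.add_apply, C_add, add_mul, sum_add_distrib]

theorem IsHomogeneous.prod_of_linear {s : Finset ι} {U : ι → MvPolynomial σ R}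
    (hU : ∀ i ∈ s, (U i).IsHomogeneous 1) : (∏ i ∈ s, U i).IsHomogeneous #s := by
  simpa using IsHomogeneous.prod s U (fun _ => 1) hU

theorem coeff_mul_one_add_pow {p q : MvPolynomial σ R} {m : ℕ} (hp : p.IsHomogeneous m)
    (hq : q.IsHomogeneous 1) (M : ℕ) (d : σ →₀ ℕ) :
    coeff d (p * (1 + q) ^ M) = M.choose (d.degree - m) * coeff d (p * q ^ (d.degree - m)) := by
  have hterm (t : ℕ) : coeff d (p * (q ^ t * (M.choose t : MvPolynomial σ R))) =
      M.choose t * coeff d (p * q ^ t) := by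
    rw [← map_natCast (C (σ := σ)), mul_comm (q ^ t), mul_left_comm, coeff_C_mul]
  simp only [add_comm 1 q, add_pow, one_pow, mul_one, mul_sum, coeff_sum, hterm]
  refine sum_eq_single (d.degree - m) (fun t _ ht => ?_) fun ht => ?_
  · rw [(hp.mul (hq.pow t)).coeff_eq_zero (by omega), mul_zero]
  · rw [Nat.choose_eq_zero_of_lt (by simp only [mem_range] at ht; omega), Nat.cast_zero, zero_mul]

theorem coeff_prod_one_add_mul {s : Finset ι} {U : ι → MvPolynomial σ R}
    (hU : ∀ i ∈ s, (U i).IsHomogeneous 1) {q : MvPolynomial σ R} {e : ℕ} (hq : q.IsHomogeneous e)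
    (d : σ →₀ ℕ) :
    coeff d ((∏ i ∈ s, (1 + U i)) * q) =
      ∑ t ∈ s.powersetCard (d.degree - e), coeff d ((∏ i ∈ t, U i) * q) := by
  rw [prod_one_add, sum_mul, coeff_sum]
  refine (sum_subset (fun t ht => mem_powerset.2 (mem_powersetCard.1 ht).1) fun t ht hts => ?_).symm
  rw [mem_powerset] at ht
  refine ((IsHomogeneous.prod_of_linear fun i hi => hU i (ht hi)).mul hq).coeff_eq_zero ?_
  intro hdeg
  exact hts (mem_powersetCard.2 ⟨ht, by omega⟩)

theorem one_add_linearForm_eq_sum_option [Fintype κ] (c : κ → R) :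
    1 + linearForm c =
      ∑ o : Option κ, monomial (o.elim 0 fun k => Finsupp.single k 1) (o.elim 1 c) := by
  simp [Fintype.sum_option, linearForm, C_mul_X_eq_monomial]

theorem coeff_prod_one_add_linearForm [Fintype ι] [Fintype κ] [DecidableEq ι] [DecidableEq κ]
    (c : ι → κ → R) :
    coeff (∑ k, Finsupp.single k 1) (∏ i, (1 + linearForm (c i))) =
      ∑ f : κ → ι with Injective f, ∏ k, c (f k) k := by
  classical
  simp_rw [one_add_linearForm_eq_sum_option, prod_univ_sum, Fintype.piFinset_univ,
    ← monomial_sum_prod, coeff_sum, coeff_monomial, ← sum_filter, sum_elim_single_eq_iff]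
  -- Row `i` contributes `1` (`g i = none`) or `c i k • X k` (`g i = some k`); the monomial
  -- `x_1⋯x_n` comes from the `g` hitting each column once, i.e. `g = partialInv f`, `f` injective.
  symm
  refine sum_nbij partialInv (fun f hf => ?_) (fun f hf f' hf' h => ?_) (fun g hg => ?_)
    fun f hf => (prod_partialInv_elim (mem_filter.1 hf).2 c).symm
  · exact mem_filter.2 ⟨mem_univ _, existsUnique_partialInv_eq_some (mem_filter.1 hf).2⟩
  · funext k
    have := partialInv_left (mem_coe.1 hf |> mem_filter.1).2 k
    rw [h] at this
    exact (((mem_coe.1 hf' |> mem_filter.1).2.isPartialInv k (f k)).1 this).symm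
  · obtain ⟨f, hf, rfl⟩ := exists_injective_partialInv_eq (mem_filter.1 (mem_coe.1 hg)).2
    exact ⟨f, mem_coe.2 (mem_filter.2 ⟨mem_univ _, hf⟩), rfl⟩

end MvPolynomial

open MvPolynomial

theorem Finsupp.degree_sum_single_one {κ : Type*} [Fintype κ] :
    (∑ k : κ, Finsupp.single k 1).degree = Fintype.card κ := by
  simp [map_sum]

theorem row_eq_ztilde_add_aEnt {N n : ℕ} (Z : Matrix (Fin N) (Fin n) ℂ) (j : Fin N) :
    Z j = ztilde Z + aEnt Z j := by
  funext k
  simp [aEnt]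

theorem rectPermanent_eq_sum_powerset {N n : ℕ} (Z : Matrix (Fin N) (Fin n) ℂ) :
    rectPermanent Z = ∑ W ∈ (univ : Finset (Fin N)).powerset, ((N - #W).choose (n - #W) : ℂ) *
      coeff (∑ k, Finsupp.single k 1)
        ((∏ j ∈ W, linearForm (aEnt Z j)) * linearForm (ztilde Z) ^ (n - #W)) := by
  refine (coeff_prod_one_add_linearForm Z).symm.trans ?_
  simp_rw [row_eq_ztilde_add_aEnt Z, linearForm_add, ← add_assoc]
  rw [prod_add_eq_sum_powerset_mul_pow, coeff_sum, card_univ, Fintype.card_fin]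
  refine sum_congr rfl fun W _ => ?_
  rw [coeff_mul_one_add_pow (IsHomogeneous.prod_of_linear fun j _ => isHomogeneous_linearForm _)
    (isHomogeneous_linearForm _), Finsupp.degree_sum_single_one, Fintype.card_fin]

theorem GZ_eq_sum_powersetCard {N n m : ℕ} (Z : Matrix (Fin N) (Fin n) ℂ) (hmn : m ≤ n) :
    GZ Z m = (N - m)! / ((n - m)! * N !) * ∑ W ∈ (univ : Finset (Fin N)).powersetCard m,
      coeff (∑ k, Finsupp.single k 1)
        ((∏ j ∈ W, linearForm (aEnt Z j)) * linearForm (ztilde Z) ^ (n - m)) := by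
  rw [GZ]
  congr 1
  refine (coeff_prod_one_add_mul (fun j _ => isHomogeneous_linearForm (aEnt Z j))
    ((isHomogeneous_linearForm (ztilde Z)).pow (n - m)) _).trans ?_
  rw [Finsupp.degree_sum_single_one, Fintype.card_fin, one_mul, Nat.sub_sub_self hmn]

theorem stmt13_general (N n : ℕ) (hnN : n ≤ N)
    (Z : Matrix (Fin N) (Fin n) ℂ) :
    ((N - n).factorial : ℂ) / (N.factorial : ℂ) * rectPermanent Z =
      ∑ m ∈ Finset.range (n + 1), GZ Z m := by
  have hU (W : Finset (Fin N)) : (∏ j ∈ W, linearForm (aEnt Z j)).IsHomogeneous #W :=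
    IsHomogeneous.prod_of_linear fun j _ => isHomogeneous_linearForm _
  rw [rectPermanent_eq_sum_powerset, mul_sum,
    sum_powerset_eq_sum_range_sum_powersetCard _ n fun W _ hW => ?vanish]
  case vanish =>
    have hdeg : (∑ k : Fin n, Finsupp.single k 1).degree ≠ #W := by
      rw [Finsupp.degree_sum_single_one, Fintype.card_fin]
      exact hW.ne
    rw [Nat.sub_eq_zero_of_le hW.le, pow_zero, mul_one, (hU W).coeff_eq_zero hdeg, mul_zero,
      mul_zero]
  refine sum_congr rfl fun m hm => ?_
  have hmn : m ≤ n := Nat.lt_succ_iff.1 (mem_range.1 hm)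
  rw [GZ_eq_sum_powersetCard Z hmn, mul_sum]
  refine sum_congr rfl fun W hW => ?_
  rw [(mem_powersetCard.1 hW).2, ← mul_assoc, factorial_div_mul_choose hmn hnN]

/-- Exact identity: `((N−n)!/N!)·per(Z) = ∑_{m=0}^n G_m(Z)` for `Z ∈ ℂ^{N×n}`, `n ≤ N`. -/
theorem stmt13 (N n : ℕ) (hn1 : 1 ≤ n) (hnN : n ≤ N)
    (Z : Matrix (Fin N) (Fin n) ℂ) :
    ((N - n).factorial : ℂ) / (N.factorial : ℂ) * rectPermanent Z =
      ∑ m ∈ Finset.range (n + 1), GZ Z m :=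
  stmt13_general N n hnN Z
end

section
/- Let N ∈ ℕ, n ∈ {1,…,N}, and Z = (z_{j,k}) ∈ ℂ^{N×n}. With z̃_k, a_{j,k}, U_j(x), G_m(Z) as defined, one has G_0(Z) = ∏_{k=1}^n z̃_k and G_1(Z) = 0. -/
/-!
Expand `∏ⱼ (1 + Uⱼ) = ∑_{t ⊆ [N]} ∏_{j ∈ t} Uⱼ`. Every `Uⱼ` and `L = ∑ₖ z̃ₖ xₖ` is a linear form,
so against `L ^ (n - m)` only the subsets with `|t| = m` reach the degree `n` of `x₁⋯xₙ`.
For `m = 0` this leaves `[x₁⋯xₙ] Lⁿ = n! ∏ₖ z̃ₖ` (the permanent of a matrix of equal rows); for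
`m = 1` it leaves `[x₁⋯xₙ] (∑ⱼ Uⱼ) L^(n-1)`, and `∑ⱼ Uⱼ = 0` because the columns of `a` are
centred.
-/

open scoped BigOperators

open MvPolynomial Finset Function

namespace MvPolynomial

variable {R : Type*} [CommSemiring R]

section LinearForms

variable {ι : Type*} [Fintype ι]

theorem isHomogeneous_sum_C_mul_X (c : ι → R) : IsHomogeneous (∑ k, C (c k) * X k) 1 :=
  IsHomogeneous.sum _ _ _ fun k _ => by
    simpa using (isHomogeneous_C ι (c k)).mul (isHomogeneous_X R k)

theorem degree_sum_single_one : (∑ k : ι, Finsupp.single k 1).degree = Fintype.card ι := by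
  simp [map_sum]

variable [DecidableEq ι]

theorem sum_single_one_comp_eq_iff_bijective (g : ι → ι) :
    ∑ i, Finsupp.single (g i) 1 = ∑ k, Finsupp.single k 1 ↔ Bijective g := by
  refine ⟨fun h => Finite.surjective_iff_bijective.mp fun k => ?_,
    fun hg => Fintype.sum_bijective g hg _ _ fun _ => rfl⟩
  have hk := DFunLike.congr_fun h k
  simp only [Finsupp.finsetSum_apply, Finsupp.single_apply, Finset.sum_ite_eq', mem_univ,
    if_true] at hk
  by_contra! hc
  simp [hc] at hk

theorem coeff_prod_sum_C_mul_X (M : Matrix ι ι R) :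
    coeff (∑ k, Finsupp.single k 1) (∏ i, ∑ k, C (M k i) * X k) = M.permanent := by
  have hmonomial (g : ι → ι) : ∏ i, C (M (g i) i) * X (g i) =
      monomial (∑ i, Finsupp.single (g i) 1) (∏ i, M (g i) i) := by
    rw [prod_mul_distrib, ← map_prod, monomial_sum_index]
    rfl
  rw [prod_univ_sum, coeff_sum]
  simp only [hmonomial, coeff_monomial, sum_single_one_comp_eq_iff_bijective,
    Fintype.piFinset_univ]
  rw [← sum_filter, Matrix.permanent]
  symm
  refine sum_bij (fun σ _ => ⇑σ) (fun σ _ => by simp)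
    (fun _ _ _ _ h => Equiv.coe_fn_injective h) (fun g hg => ?_) fun _ _ => rfl
  exact ⟨Equiv.ofBijective g (mem_filter.1 hg).2, mem_univ _, rfl⟩

theorem coeff_sum_C_mul_X_pow_card (c : ι → R) :
    coeff (∑ k, Finsupp.single k 1) ((∑ k, C (c k) * X k) ^ Fintype.card ι) =
      (Fintype.card ι).factorial * ∏ k, c k := by
  rw [← card_univ, ← prod_const]
  refine (coeff_prod_sum_C_mul_X (Matrix.of fun k _ => c k)).trans ?_
  simp [Matrix.permanent, Equiv.prod_comp, Fintype.card_perm]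

end LinearForms

theorem coeff_prod_one_add_mul_of_isHomogeneous {σ ι : Type*} (s : Finset ι)
    {U : ι → MvPolynomial σ R} (hU : ∀ i ∈ s, (U i).IsHomogeneous 1)
    {Q : MvPolynomial σ R} {p r : ℕ} (hQ : Q.IsHomogeneous p) {d : σ →₀ ℕ}
    (hd : d.degree = r + p) :
    coeff d ((∏ i ∈ s, (1 + U i)) * Q) =
      ∑ t ∈ s.powersetCard r, coeff d ((∏ i ∈ t, U i) * Q) := by
  classical
  rw [prod_one_add, sum_mul, coeff_sum, powersetCard_eq_filter, sum_filter]
  refine sum_congr rfl fun t ht => ?_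
  split_ifs with htr
  · rfl
  have htU : (∏ i ∈ t, U i).IsHomogeneous t.card := by
    simpa using IsHomogeneous.prod t U (fun _ => 1) fun i hi => hU i (mem_powerset.1 ht hi)
  exact (htU.mul hQ).coeff_eq_zero (by omega)

end MvPolynomial

theorem sum_aEnt_eq_zero {N n : ℕ} (Z : Matrix (Fin N) (Fin n) ℂ) (k : Fin n) :
    ∑ j, aEnt Z j k = 0 := by
  rcases Nat.eq_zero_or_pos N with rfl | hN
  · simp
  have hN' : (N : ℂ) ≠ 0 := by exact_mod_cast hN.ne'
  simp [aEnt, ztilde, sum_sub_distrib, hN']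

theorem stmt15_general (N n : ℕ) (hn1 : 1 ≤ n)
    (Z : Matrix (Fin N) (Fin n) ℂ) :
    GZ Z 0 = ∏ k : Fin n, ztilde Z k ∧ GZ Z 1 = 0 := by
  have hU : ∀ j ∈ (univ : Finset (Fin N)), (∑ k, C (aEnt Z j k) * X k).IsHomogeneous 1 :=
    fun j _ => isHomogeneous_sum_C_mul_X _
  have hL := isHomogeneous_sum_C_mul_X (ztilde Z)
  have hdeg : (∑ k : Fin n, Finsupp.single k 1).degree = n := by
    rw [degree_sum_single_one, Fintype.card_fin]
  have hLn := coeff_sum_C_mul_X_pow_card (ztilde Z)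
  rw [Fintype.card_fin] at hLn
  have hU_sum : ∑ j, ∑ k, C (aEnt Z j k) * X k = 0 := by
    rw [sum_comm]
    simp [← sum_mul, ← map_sum, sum_aEnt_eq_zero]
  constructor
  · rw [GZ, Nat.sub_zero, Nat.sub_zero, coeff_prod_one_add_mul_of_isHomogeneous univ hU (hL.pow n)
      (r := 0) (by omega), powersetCard_zero, sum_singleton, prod_empty, one_mul, hLn]
    field_simp [Nat.factorial_ne_zero]
  · rw [GZ, coeff_prod_one_add_mul_of_isHomogeneous univ hU (hL.pow (n - 1)) (r := 1)
      (by omega), powersetCard_one, sum_map]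
    simp only [Embedding.coeFn_mk, prod_singleton, ← coeff_sum, ← sum_mul, hU_sum, zero_mul,
      coeff_zero, mul_zero]

/-- `G_0(Z) = ∏_{k=1}^n z̃_k` and `G_1(Z) = 0`. -/
theorem stmt15 (N n : ℕ) (hn1 : 1 ≤ n) (hnN : n ≤ N)
    (Z : Matrix (Fin N) (Fin n) ℂ) :
    GZ Z 0 = ∏ k : Fin n, ztilde Z k ∧ GZ Z 1 = 0 :=
  stmt15_general N n hn1 Z
end
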